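/- arXiv:2104.05536 — 8 statements merged into one kernel-verified Lean document; each statement's English description precedes it below -/
import Mathlib

section
/- Let G be a connected weighted graph with nonnegative edge weights, and let R be a bipartite subgraph of G such that every connected component of R is an induced subgraph of G. Then the maximum weight of a cut of G is at least (w(G) + w(R))/2, where w(H) denotes the total weight of edges of H. -/
/-!
Flip the bipartition `B` of `R` independently on each connected component of `R` and average
the resulting cuts of `G` over all `2 ^ #components` choices. An edge of `R` is cut by every
choice. An edge of `G` outside `R` joins two different components of `R`, since components are
induced, so it is cut by exactly half of the choices. Hence the average cut weight is
`w(R) + (w(G) - w(R)) / 2`, and some choice attains at least that.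
-/

namespace MaxCut

/-- Weight of the cut induced by vertex set `A`: total weight of edges of `G`
with exactly one endpoint in `A`. -/
noncomputable def cutWeight {V : Type*} (G : SimpleGraph V) (w : Sym2 V → ℝ) (A : Set V) : ℝ :=
  ∑ᶠ e ∈ {e ∈ G.edgeSet | ∃ x y, e = s(x, y) ∧ x ∈ A ∧ y ∉ A}, w e

/-- Total weight of the edges of `G`. -/
noncomputable def totalWeight {V : Type*} (G : SimpleGraph V) (w : Sym2 V → ℝ) : ℝ :=
  ∑ᶠ e ∈ G.edgeSet, w e

/-- Total weight of a set of edges. -/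
noncomputable def setWeight {V : Type*} (w : Sym2 V → ℝ) (M : Set (Sym2 V)) : ℝ :=
  ∑ᶠ e ∈ M, w e

/-- `T` is a spanning tree of `G`. -/
def IsSpanningTree {V : Type*} (G T : SimpleGraph V) : Prop := T ≤ G ∧ T.IsTree

/-- `T` is a DFS tree of `G` rooted at `r`: a spanning tree such that every edge of `G`
joins an ancestor–descendant pair (here `x` is an ancestor of `y` in the tree `T` rooted
at `r` iff `x` lies on the unique `r`–`y` path, equivalently
`T.dist r x + T.dist x y = T.dist r y`). -/
def IsDFSTree {V : Type*} (G T : SimpleGraph V) (r : V) : Prop :=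
  T ≤ G ∧ T.IsTree ∧ ∀ x y, G.Adj x y →
    T.dist r x + T.dist x y = T.dist r y ∨ T.dist r y + T.dist y x = T.dist r x

/-- `M` is a matching of `G` (a set of pairwise non-adjacent edges of `G`). -/
def IsMatching {V : Type*} (G : SimpleGraph V) (M : Set (Sym2 V)) : Prop :=
  M ⊆ G.edgeSet ∧ ∀ e ∈ M, ∀ f ∈ M, e ≠ f → ∀ v, ¬(v ∈ e ∧ v ∈ f)

/-- Every vertex of `G` has degree at most `d`. -/
def MaxDegreeLE {V : Type*} (G : SimpleGraph V) (d : ℕ) : Prop :=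
  ∀ v : V, {u | G.Adj v u}.ncard ≤ d

section CutAveraging

variable {V : Type*}

def Crosses (A : Set V) (e : Sym2 V) : Prop := ∃ x y, e = s(x, y) ∧ x ∈ A ∧ y ∉ A

theorem crosses_mk_iff {A : Set V} {x y : V} : Crosses A s(x, y) ↔ ¬(x ∈ A ↔ y ∈ A) := by
  constructor
  · rintro ⟨a, b, hab, ha, hb⟩
    rcases Sym2.eq_iff.mp hab with ⟨rfl, rfl⟩ | ⟨rfl, rfl⟩ <;> tauto
  · intro h
    by_cases hx : x ∈ A
    · exact ⟨x, y, rfl, hx, fun hy => h (iff_of_true hx hy)⟩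
    · exact ⟨y, x, Sym2.eq_swap, not_not.mp fun hy => h (iff_of_false hx hy), hx⟩

theorem sum_cutWeight_eq_finsum [Finite V] {ι : Type*} [Fintype ι] (G : SimpleGraph V)
    (w : Sym2 V → ℝ) (A : ι → Set V) :
    ∑ i, cutWeight G w (A i) = ∑ᶠ e ∈ G.edgeSet, Nat.card {i // Crosses (A i) e} * w e := by
  classical
  have hE : G.edgeSet.Finite := Set.toFinite _
  have hcut : ∀ i,
      cutWeight G w (A i) = ∑ e ∈ hE.toFinset, if Crosses (A i) e then w e else 0 := by
    intro i
    rw [← Finset.sum_filter, ← finsum_mem_coe_finset, Finset.coe_filter]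
    simp only [Set.Finite.mem_toFinset]
    rfl
  simp_rw [hcut, finsum_mem_eq_finite_toFinset_sum _ hE]
  rw [Finset.sum_comm]
  refine Finset.sum_congr rfl fun e _ => ?_
  rw [← Finset.sum_filter, Finset.sum_const, nsmul_eq_mul, Nat.card_eq_fintype_card,
    Fintype.card_subtype]

theorem two_mul_natCard_subtype_eq_of_involutive {α : Type*} [Finite α] {p : α → Prop}
    {f : α → α} (hf : Function.Involutive f) (hp : ∀ a, p (f a) ↔ ¬p a) :
    2 * Nat.card {a // p a} = Nat.card α := by
  have : Nat.card {a // ¬p a} = Nat.card {a // p a} :=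
    Nat.card_congr (hf.toPerm f |>.subtypeEquiv fun a => (hp a).symm)
  have hsplit := Set.ncard_add_ncard_compl {a | p a}
  change Nat.card {a // p a} + Nat.card {a // ¬p a} = Nat.card α at hsplit
  omega

def componentFlip (R : SimpleGraph V) (B : Set V) (ε : R.ConnectedComponent → Bool) : Set V :=
  {v | v ∈ B ↔ ε (R.connectedComponentMk v) = true}

variable {R : SimpleGraph V} {B : Set V}

@[simp]
theorem mem_componentFlip {ε : R.ConnectedComponent → Bool} {v : V} :
    v ∈ componentFlip R B ε ↔ (v ∈ B ↔ ε (R.connectedComponentMk v) = true) :=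
  Iff.rfl

theorem crosses_componentFlip_of_reachable {x y : V} (hxy : R.Reachable x y)
    (hB : x ∈ B ↔ y ∉ B) (ε : R.ConnectedComponent → Bool) :
    Crosses (componentFlip R B ε) s(x, y) := by
  rw [crosses_mk_iff]
  simp only [mem_componentFlip, SimpleGraph.ConnectedComponent.sound hxy]
  tauto

theorem two_mul_natCard_crosses_componentFlip [Finite V] {x y : V} (hxy : ¬R.Reachable x y) :
    2 * Nat.card {ε // Crosses (componentFlip R B ε) s(x, y)} =
      Nat.card (R.ConnectedComponent → Bool) := by
  classical
  -- flipping the component of `y` toggles whether `s(x, y)` is cut, as `x` lies elsewhere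
  set c := R.connectedComponentMk y
  have hxc : R.connectedComponentMk x ≠ c := fun h => hxy (SimpleGraph.ConnectedComponent.exact h)
  refine two_mul_natCard_subtype_eq_of_involutive (f := fun ε => Function.update ε c !(ε c))
    (fun ε => by simp) fun ε => ?_
  simp only [crosses_mk_iff, mem_componentFlip, Function.update_of_ne hxc,
    Function.update_self, c]
  cases ε c <;> tauto

theorem sum_cutWeight_componentFlip [Finite V] [Fintype R.ConnectedComponent]
    [DecidableEq R.ConnectedComponent] {G : SimpleGraph V} (w : Sym2 V → ℝ) (hRG : R ≤ G)
    (hB : ∀ x y, R.Adj x y → (x ∈ B ↔ y ∉ B))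
    (hind : ∀ x y, G.Adj x y → R.Reachable x y → R.Adj x y) :
    ∑ ε, cutWeight G w (componentFlip R B ε) =
      Nat.card (R.ConnectedComponent → Bool) * ((totalWeight G w + totalWeight R w) / 2) := by
  have hE : G.edgeSet.Finite := Set.toFinite _
  have hRE : R.edgeSet ⊆ G.edgeSet := SimpleGraph.edgeSet_mono hRG
  have hR_edge : ∀ e ∈ R.edgeSet,
      Nat.card {ε // Crosses (componentFlip R B ε) e} * w e =
        Nat.card (R.ConnectedComponent → Bool) * w e := by
    refine Sym2.ind fun x y hxy => ?_
    have hall := crosses_componentFlip_of_reachable (B := B) hxy.reachable (hB x y hxy)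
    rw [Nat.card_congr (Equiv.subtypeUnivEquiv hall)]
  have hGR_edge : ∀ e ∈ G.edgeSet \ R.edgeSet,
      Nat.card {ε // Crosses (componentFlip R B ε) e} * w e =
        Nat.card (R.ConnectedComponent → Bool) / 2 * w e := by
    refine Sym2.ind fun x y hxy => ?_
    have hcard : 2 * (Nat.card {ε // Crosses (componentFlip R B ε) s(x, y)} : ℝ) =
        Nat.card (R.ConnectedComponent → Bool) := by
      exact_mod_cast
        two_mul_natCard_crosses_componentFlip (B := B) fun h => hxy.2 (hind x y hxy.1 h)
    rw [← hcard]
    ring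
  rw [sum_cutWeight_eq_finsum, ← finsum_mem_add_sdiff hRE hE, totalWeight, totalWeight,
    ← finsum_mem_add_sdiff hRE hE, finsum_mem_congr rfl hR_edge, finsum_mem_congr rfl hGR_edge,
    ← mul_finsum_mem, ← mul_finsum_mem]
  ring

end CutAveraging

theorem maxcut_ge_of_B_subgraph_general {V : Type*} [Fintype V] (G R : SimpleGraph V)
    (w : Sym2 V → ℝ)
    (hRG : R ≤ G)
    (hbip : ∃ B : Set V, ∀ x y, R.Adj x y → (x ∈ B ↔ y ∉ B))
    (hind : ∀ x y, G.Adj x y → R.Reachable x y → R.Adj x y) :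
    ∃ A : Set V, (totalWeight G w + totalWeight R w) / 2 ≤ cutWeight G w A := by
  classical
  obtain ⟨B, hB⟩ := hbip
  have hsum := sum_cutWeight_componentFlip w hRG hB hind
  rw [Nat.card_eq_fintype_card, ← Finset.card_univ, ← nsmul_eq_mul, ← Finset.sum_const]
    at hsum
  obtain ⟨ε, -, hε⟩ := Finset.exists_le_of_sum_le Finset.univ_nonempty hsum.ge
  exact ⟨componentFlip R B ε, hε⟩

/-- If `R` is a bipartite subgraph of `G` all of whose connected components are
induced subgraphs of `G`, then the maximum weight of a cut of `G` is at least
`(w(G) + w(R)) / 2`. -/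
theorem maxcut_ge_of_B_subgraph {V : Type*} [Fintype V] (G R : SimpleGraph V)
    (w : Sym2 V → ℝ) (hw : ∀ e, 0 ≤ w e) (hG : G.Connected)
    (hRG : R ≤ G)
    (hbip : ∃ B : Set V, ∀ x y, R.Adj x y → (x ∈ B ↔ y ∉ B))
    (hind : ∀ x y, G.Adj x y → R.Reachable x y → R.Adj x y) :
    ∃ A : Set V, (totalWeight G w + totalWeight R w) / 2 ≤ cutWeight G w A :=
  maxcut_ge_of_B_subgraph_general G R w hRG hbip hind

end MaxCut
end

section
/- Let G be a connected weighted graph with nonnegative edge weights and let D be a DFS spanning tree of G (a spanning tree with no cross edges, i.e., for every edge xy of G, x is an ancestor of y or y is an ancestor of x in D). Then mac(G) ≥ w(G)/2 + w(D)/4. -/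
namespace MaxCut

/-! ### Auxiliary machinery for Statement 1.

The key construction: given the DFS tree `D` rooted at `r`, color each vertex `v` by
`parity (depth v) XOR s (block (depth v))`, where the depths are grouped into blocks
`{t, t+1}, {t+2, t+3}, …` of size two with a random offset `t ∈ {0,1}`, and `s` assigns an
independent uniformly random bit to every block.  Every tree edge (depth gap exactly `1`)
is cut with probability `3/4`, and every other edge of `G` (an ancestor–descendant pair
with depth gap `≥ 2`, whose endpoints therefore always lie in different blocks) is cut
with probability exactly `1/2`.  Averaging finishes the proof. -/

/-- Safe lookup of a bit-vector indexed by `Fin n` at a natural number index. -/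
def sget {n : ℕ} (s : Fin n → Bool) (k : ℕ) : Bool :=
  if h : k < n then s ⟨k, h⟩ else false

/-- The coloring of depth `p` determined by offset bit `t` and block bits `s`. -/
def colB {n : ℕ} (t : Bool) (s : Fin n → Bool) (p : ℕ) : Bool :=
  xor (decide (p % 2 = 1)) (sget s ((p + cond t 1 0) / 2))

lemma bool_pair_iff (a b : Bool) :
    ((a = true ∧ ¬ b = true) ∨ (b = true ∧ ¬ a = true)) ↔ ¬ (a = b) := by
  revert a b; decide

lemma bool_xor_ne (a b x y : Bool) :
    (xor a x ≠ xor b y) ↔ (x ≠ xor a (xor b y)) := by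
  revert a b x y; decide

lemma bool_flip1 : ∀ a c : Bool, ¬ (a = c) → (!a) = c := by decide

lemma bool_flip2 : ∀ a c : Bool, a = c → ¬ ((!a) = c) := by decide

lemma bool_xor_ne_of_ne : ∀ a b x : Bool, a ≠ b → xor a x ≠ xor b x := by decide

lemma card_univ_fun_bool (n : ℕ) :
    (Finset.univ : Finset (Fin n → Bool)).card = 2 ^ n := by
  simp [Finset.card_univ, Fintype.card_fun]

lemma two_pow_pred {n : ℕ} (hn : 0 < n) : 2 ^ n = 2 * 2 ^ (n - 1) := by
  obtain ⟨m, rfl⟩ : ∃ m, n = m + 1 := ⟨n - 1, by omega⟩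
  rw [Nat.add_sub_cancel, pow_succ]; ring

lemma two_pow_pred_real {n : ℕ} (hn : 0 < n) : (2 : ℝ) ^ n = 2 * 2 ^ (n - 1) := by
  obtain ⟨m, rfl⟩ : ∃ m, n = m + 1 := ⟨n - 1, by omega⟩
  rw [Nat.add_sub_cancel, pow_succ]; ring

lemma two_pow_pred_add {n : ℕ} (hn : 0 < n) : 2 ^ (n - 1) + 2 ^ (n - 1) = 2 ^ n := by
  rw [two_pow_pred hn]; ring

/-- Exactly half of all bit vectors satisfy `s i ≠ f (s j)` for fixed distinct `i, j`. -/
lemma half_count {n : ℕ} (i j : Fin n) (hij : i ≠ j) (f : Bool → Bool) :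
    (Finset.univ.filter fun s : Fin n → Bool => s i ≠ f (s j)).card = 2 ^ (n - 1) := by
  classical
  have flip : ∀ s : Fin n → Bool, Function.update s i (!(s i)) i = !(s i) := fun s =>
    Function.update_self i (!(s i)) s
  have keep : ∀ s : Fin n → Bool, Function.update s i (!(s i)) j = s j := fun s =>
    Function.update_of_ne (Ne.symm hij) _ _
  have hinv : ∀ s : Fin n → Bool,
      Function.update (Function.update s i (!(s i))) i
        (!(Function.update s i (!(s i)) i)) = s := by
    intro s
    rw [flip s, Bool.not_not, Function.update_idem, Function.update_eq_self]
  have hbij : (Finset.univ.filter fun s : Fin n → Bool => ¬ (s i = f (s j))).card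
      = (Finset.univ.filter fun s : Fin n → Bool => s i = f (s j)).card := by
    refine Finset.card_bij' (fun s _ => Function.update s i (!(s i)))
      (fun s _ => Function.update s i (!(s i))) ?_ ?_ ?_ ?_
    · intro s hs
      simp only [Finset.mem_filter, Finset.mem_univ, true_and] at hs ⊢
      rw [flip s, keep s]
      exact bool_flip1 _ _ hs
    · intro s hs
      simp only [Finset.mem_filter, Finset.mem_univ, true_and] at hs ⊢
      rw [flip s, keep s]
      exact bool_flip2 _ _ hs
    · intro s _
      exact hinv s
    · intro s _
      exact hinv s
  have hsplit := Finset.card_filter_add_card_filter_not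
    (s := (Finset.univ : Finset (Fin n → Bool)))
    (p := fun s : Fin n → Bool => s i = f (s j))
  rw [card_univ_fun_bool] at hsplit
  have hn : 0 < n := i.pos
  have h2 : 2 ^ n = 2 * 2 ^ (n - 1) := two_pow_pred hn
  have hgoal : (Finset.univ.filter fun s : Fin n → Bool => s i ≠ f (s j))
      = (Finset.univ.filter fun s : Fin n → Bool => ¬ (s i = f (s j))) :=
    Finset.filter_congr fun s _ => Iff.rfl
  rw [hgoal, hbij]
  have hsplit' : (Finset.univ.filter fun s : Fin n → Bool => s i = f (s j)).card
      + (Finset.univ.filter fun s : Fin n → Bool => ¬ (s i = f (s j))).card = 2 ^ n := by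
    simpa using hsplit
  rw [hbij] at hsplit'
  linarith

/-- If the indices coincide but the parities differ, all bit vectors give a cut. -/
lemma full_count {n : ℕ} (i : Fin n) {a b : Bool} (hab : a ≠ b) :
    (Finset.univ.filter fun s : Fin n → Bool => xor a (s i) ≠ xor b (s i)).card = 2 ^ n := by
  classical
  have hall : ∀ s ∈ (Finset.univ : Finset (Fin n → Bool)), xor a (s i) ≠ xor b (s i) :=
    fun s _ => bool_xor_ne_of_ne a b (s i) hab
  rw [Finset.filter_true_of_mem hall]
  exact card_univ_fun_bool n

lemma cond_le_one (t : Bool) : cond t 1 0 ≤ 1 := by cases t <;> simp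

/-- Count when the two block indices differ. -/
lemma cnt_eq_half {n : ℕ} (t : Bool) {p q : ℕ} (hpn : p < n) (hqn : q < n)
    (hne : (p + cond t 1 0) / 2 ≠ (q + cond t 1 0) / 2) :
    (Finset.univ.filter fun s : Fin n → Bool => colB t s p ≠ colB t s q).card
      = 2 ^ (n - 1) := by
  classical
  have hc := cond_le_one t
  have hbp : (p + cond t 1 0) / 2 < n := by omega
  have hbq : (q + cond t 1 0) / 2 < n := by omega
  have hIJ : (⟨(p + cond t 1 0) / 2, hbp⟩ : Fin n) ≠ ⟨(q + cond t 1 0) / 2, hbq⟩ := by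
    simpa [Fin.ext_iff] using hne
  have hrw : ∀ s : Fin n → Bool, (colB t s p ≠ colB t s q) ↔
      (s ⟨(p + cond t 1 0) / 2, hbp⟩ ≠
        xor (decide (p % 2 = 1)) (xor (decide (q % 2 = 1))
          (s ⟨(q + cond t 1 0) / 2, hbq⟩))) := by
    intro s
    simp only [colB, sget, dif_pos hbp, dif_pos hbq]
    exact bool_xor_ne _ _ _ _
  rw [Finset.filter_congr fun s _ => hrw s]
  exact half_count _ _ hIJ
    (fun v => xor (decide (p % 2 = 1)) (xor (decide (q % 2 = 1)) v))

/-- Count when the two block indices coincide (forces consecutive depths). -/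
lemma cnt_eq_full {n : ℕ} (t : Bool) {p q : ℕ} (hpq : p < q) (hqn : q < n)
    (heq : (p + cond t 1 0) / 2 = (q + cond t 1 0) / 2) :
    (Finset.univ.filter fun s : Fin n → Bool => colB t s p ≠ colB t s q).card = 2 ^ n := by
  classical
  have hc := cond_le_one t
  have hbq : (q + cond t 1 0) / 2 < n := by omega
  have hpar : ¬ (p % 2 = 1 ↔ q % 2 = 1) := by omega
  have hab : (decide (p % 2 = 1)) ≠ (decide (q % 2 = 1)) := by
    intro h
    exact hpar (by simpa [decide_eq_decide] using h)
  have hrw : ∀ s : Fin n → Bool, (colB t s p ≠ colB t s q) ↔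
      (xor (decide (p % 2 = 1)) (s ⟨(q + cond t 1 0) / 2, hbq⟩) ≠
        xor (decide (q % 2 = 1)) (s ⟨(q + cond t 1 0) / 2, hbq⟩)) := by
    intro s
    simp only [colB, sget, heq, dif_pos hbq]
  rw [Finset.filter_congr fun s _ => hrw s]
  exact full_count _ hab

/-- Every fixed offset cuts a pair of distinct depths at least half the time. -/
lemma cnt_ge {n : ℕ} (t : Bool) {p q : ℕ} (hpq : p < q) (hqn : q < n) :
    2 ^ (n - 1) ≤
      (Finset.univ.filter fun s : Fin n → Bool => colB t s p ≠ colB t s q).card := by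
  by_cases h : (p + cond t 1 0) / 2 = (q + cond t 1 0) / 2
  · rw [cnt_eq_full t hpq hqn h]
    exact Nat.pow_le_pow_right (by norm_num) (by omega)
  · rw [cnt_eq_half t (lt_trans hpq hqn) hqn h]

/-- Consecutive depths are cut with total frequency at least `3/4`. -/
lemma cnt_tree {n : ℕ} {p q : ℕ} (hq1 : q = p + 1) (hqn : q < n) :
    2 ^ n + 2 ^ (n - 1) ≤
      (Finset.univ.filter fun s : Fin n → Bool => colB false s p ≠ colB false s q).card
      + (Finset.univ.filter fun s : Fin n → Bool => colB true s p ≠ colB true s q).card := by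
  have hpq : p < q := by omega
  have hpn : p < n := by omega
  by_cases hp : p % 2 = 0
  · have h1 : (p + cond false 1 0) / 2 = (q + cond false 1 0) / 2 := by
      simp only [cond]; omega
    have h2 : (p + cond true 1 0) / 2 ≠ (q + cond true 1 0) / 2 := by
      simp only [cond]; omega
    rw [cnt_eq_full false hpq hqn h1, cnt_eq_half true hpn hqn h2]
  · have h1 : (p + cond true 1 0) / 2 = (q + cond true 1 0) / 2 := by
      simp only [cond]; omega
    have h2 : (p + cond false 1 0) / 2 ≠ (q + cond false 1 0) / 2 := by
      simp only [cond]; omega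
    rw [cnt_eq_full true hpq hqn h1, cnt_eq_half false hpn hqn h2]
    omega

set_option maxHeartbeats 4000000 in
/-- If `D` is a DFS tree of `G`, then `mac(G) ≥ w(G)/2 + w(D)/4`. -/
theorem maxcut_ge_of_dfs_tree {V : Type*} [Fintype V] (G D : SimpleGraph V) (r : V)
    (w : Sym2 V → ℝ) (hw : ∀ e, 0 ≤ w e) (hG : G.Connected)
    (hD : IsDFSTree G D r) :
    ∃ A : Set V, totalWeight G w / 2 + totalWeight D w / 4 ≤ cutWeight G w A := by
  classical
  obtain ⟨hDG, hTree, hAnc⟩ := hD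
  have hDconn : D.Connected := hTree.isConnected
  set n := Fintype.card V with hn
  have hn0 : 0 < n := Fintype.card_pos_iff.mpr hG.nonempty
  -- depths are smaller than `n`
  have hdepth : ∀ v : V, D.dist r v < n := by
    intro v
    obtain ⟨pw⟩ := hDconn.preconnected r v
    have h1 : D.dist r v ≤ (pw.toPath : D.Walk r v).length := SimpleGraph.dist_le _
    have h2 : (pw.toPath : D.Walk r v).length < n := pw.toPath.2.length_lt
    omega
  set dep : V → ℕ := fun v => D.dist r v with hdep
  -- the random cuts
  obtain ⟨A, hA⟩ : ∃ A : Bool → (Fin n → Bool) → Set V,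
      A = fun t s => {v : V | colB t s (dep v) = true} := ⟨_, rfl⟩
  -- finite edge sets
  obtain ⟨EF, hEF⟩ : ∃ F : Finset (Sym2 V), ↑F = G.edgeSet :=
    (Set.toFinite _).exists_finset_coe
  obtain ⟨DF, hDFc⟩ : ∃ F : Finset (Sym2 V), ↑F = D.edgeSet :=
    (Set.toFinite _).exists_finset_coe
  have hDFEF : DF ⊆ EF := by
    rw [← Finset.coe_subset, hEF, hDFc]
    exact SimpleGraph.edgeSet_mono hDG
  have hTW : totalWeight G w = ∑ e ∈ EF, w e := by
    unfold totalWeight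
    rw [← hEF, finsum_mem_coe_finset]
  have hTWD : totalWeight D w = ∑ e ∈ DF, w e := by
    unfold totalWeight
    rw [← hDFc, finsum_mem_coe_finset]
  -- rewrite cutWeight as a sum with indicators
  have hcutW : ∀ B : Set V, cutWeight G w B
      = ∑ e ∈ EF, (if (∃ x y, e = s(x, y) ∧ x ∈ B ∧ y ∉ B) then w e else 0) := by
    intro B
    unfold cutWeight
    have hset : {e ∈ G.edgeSet | ∃ x y, e = s(x, y) ∧ x ∈ B ∧ y ∉ B}
        = ↑(EF.filter (fun e => ∃ x y, e = s(x, y) ∧ x ∈ B ∧ y ∉ B)) := by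
      have hmem : ∀ e : Sym2 V, e ∈ EF ↔ e ∈ G.edgeSet := fun e => by
        rw [← hEF]; exact Iff.rfl
      rw [Finset.coe_filter]
      ext e
      simp only [Set.mem_setOf_eq, hmem]
    rw [hset, finsum_mem_coe_finset, Finset.sum_filter]
  -- the per-edge inequality
  have mainOrd : ∀ (x y : V) (e : Sym2 V), e = s(x, y) → G.Adj x y →
      dep x + D.dist x y = dep y →
      (2 ^ n : ℝ) * w e + (if e ∈ DF then (2 ^ (n - 1) : ℝ) * w e else 0)
        ≤ ∑ t : Bool, ∑ s : Fin n → Bool,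
            (if (∃ a b, e = s(a, b) ∧ a ∈ A t s ∧ b ∉ A t s) then w e else 0) := by
    intro x y e he hadj hanc
    have hxy : x ≠ y := G.ne_of_adj hadj
    have hgap : 0 < D.dist x y := hDconn.pos_dist_of_ne hxy
    have hpq : dep x < dep y := by omega
    have hqn : dep y < n := hdepth y
    have hpn : dep x < n := hdepth x
    -- the cut condition is a color mismatch
    have hiff : ∀ (t : Bool) (s : Fin n → Bool),
        (∃ a b, e = s(a, b) ∧ a ∈ A t s ∧ b ∉ A t s) ↔
          (colB t s (dep x) ≠ colB t s (dep y)) := by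
      intro t s
      have hmem : ∀ u : V, u ∈ A t s ↔ colB t s (dep u) = true := fun u => by
        rw [hA]; exact Iff.rfl
      rw [he]
      constructor
      · rintro ⟨a, b, habe, ha, hb⟩
        rw [Sym2.eq_iff] at habe
        have ha' : colB t s (dep a) = true := (hmem a).mp ha
        have hb' : ¬ colB t s (dep b) = true := fun hh => hb ((hmem b).mpr hh)
        refine (bool_pair_iff (colB t s (dep x)) (colB t s (dep y))).mp ?_
        rcases habe with ⟨rfl, rfl⟩ | ⟨rfl, rfl⟩
        · exact Or.inl ⟨ha', hb'⟩
        · exact Or.inr ⟨ha', hb'⟩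
      · intro hne
        rcases (bool_pair_iff (colB t s (dep x)) (colB t s (dep y))).mpr hne with
          ⟨h1, h2⟩ | ⟨h1, h2⟩
        · exact ⟨x, y, rfl, (hmem x).mpr h1, fun hb => h2 ((hmem y).mp hb)⟩
        · exact ⟨y, x, Sym2.eq_swap.symm, (hmem y).mpr h1, fun hb => h2 ((hmem x).mp hb)⟩
    have hsum : ∀ t : Bool,
        (∑ s : Fin n → Bool,
          (if (∃ a b, e = s(a, b) ∧ a ∈ A t s ∧ b ∉ A t s) then w e else 0))
        = ((Finset.univ.filter fun s : Fin n → Bool =>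
              colB t s (dep x) ≠ colB t s (dep y)).card : ℝ) * w e := by
      intro t
      rw [Finset.sum_congr rfl fun s _ => if_congr (hiff t s) rfl rfl]
      rw [← Finset.sum_filter, Finset.sum_const, nsmul_eq_mul]
    rw [Fintype.sum_bool, hsum true, hsum false]
    by_cases hDFe : e ∈ DF
    · have hDadj : D.Adj x y := by
        have h1 : e ∈ (DF : Set (Sym2 V)) := hDFe
        rw [hDFc, he] at h1
        exact h1
      have hd1 : D.dist x y = 1 := SimpleGraph.dist_eq_one_iff_adj.mpr hDadj
      have hq1 : dep y = dep x + 1 := by omega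
      rw [if_pos hDFe]
      have hcnt := cnt_tree (n := n) hq1 hqn
      have hcast : ((2 ^ n + 2 ^ (n - 1) : ℕ) : ℝ)
          ≤ (((Finset.univ.filter fun s : Fin n → Bool =>
                colB false s (dep x) ≠ colB false s (dep y)).card
              + (Finset.univ.filter fun s : Fin n → Bool =>
                colB true s (dep x) ≠ colB true s (dep y)).card : ℕ) : ℝ) :=
        Nat.cast_le.mpr hcnt
      push_cast at hcast
      nlinarith [hw e, hcast]
    · rw [if_neg hDFe, add_zero]
      have h1 := cnt_ge (n := n) false hpq hqn
      have h2 := cnt_ge (n := n) true hpq hqn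
      have hcnt : 2 ^ (n - 1) + 2 ^ (n - 1) ≤
          (Finset.univ.filter fun s : Fin n → Bool =>
              colB false s (dep x) ≠ colB false s (dep y)).card
          + (Finset.univ.filter fun s : Fin n → Bool =>
              colB true s (dep x) ≠ colB true s (dep y)).card := Nat.add_le_add h1 h2
      have hpow : 2 ^ (n - 1) + 2 ^ (n - 1) = 2 ^ n := by
        have hm : n = (n - 1) + 1 := by omega
        rw [hm, Nat.add_sub_cancel, pow_succ]; ring
      rw [hpow] at hcnt
      have hcast : ((2 ^ n : ℕ) : ℝ)
          ≤ (((Finset.univ.filter fun s : Fin n → Bool =>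
                colB false s (dep x) ≠ colB false s (dep y)).card
              + (Finset.univ.filter fun s : Fin n → Bool =>
                colB true s (dep x) ≠ colB true s (dep y)).card : ℕ) : ℝ) :=
        Nat.cast_le.mpr hcnt
      push_cast at hcast
      nlinarith [hw e, hcast]
  have perEdge : ∀ e ∈ EF,
      (2 ^ n : ℝ) * w e + (if e ∈ DF then (2 ^ (n - 1) : ℝ) * w e else 0)
        ≤ ∑ t : Bool, ∑ s : Fin n → Bool,
            (if (∃ a b, e = s(a, b) ∧ a ∈ A t s ∧ b ∉ A t s) then w e else 0) := by
    intro e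
    induction e using Sym2.ind with
    | _ x y =>
      intro he
      have hadj : G.Adj x y := by
        have h1 : s(x, y) ∈ (EF : Set (Sym2 V)) := he
        rw [hEF] at h1
        exact h1
      rcases hAnc x y hadj with h | h
      · exact mainOrd x y _ rfl hadj h
      · exact mainOrd y x _ Sym2.eq_swap hadj.symm h
  -- summing the per-edge inequality
  have keyIneq : (2 ^ n : ℝ) * totalWeight G w + (2 ^ (n - 1) : ℝ) * totalWeight D w
      ≤ ∑ t : Bool, ∑ s : Fin n → Bool, cutWeight G w (A t s) := by
    have h1 : ∑ t : Bool, ∑ s : Fin n → Bool, cutWeight G w (A t s)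
        = ∑ e ∈ EF, ∑ t : Bool, ∑ s : Fin n → Bool,
            (if (∃ a b, e = s(a, b) ∧ a ∈ A t s ∧ b ∉ A t s) then w e else 0) := by
      calc ∑ t : Bool, ∑ s : Fin n → Bool, cutWeight G w (A t s)
          = ∑ t : Bool, ∑ s : Fin n → Bool, ∑ e ∈ EF,
              (if (∃ a b, e = s(a, b) ∧ a ∈ A t s ∧ b ∉ A t s) then w e else 0) := by
            exact Finset.sum_congr rfl fun t _ =>
              Finset.sum_congr rfl fun s _ => hcutW (A t s)
        _ = ∑ t : Bool, ∑ e ∈ EF, ∑ s : Fin n → Bool,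
              (if (∃ a b, e = s(a, b) ∧ a ∈ A t s ∧ b ∉ A t s) then w e else 0) :=
            Finset.sum_congr rfl fun t _ =>
              Finset.sum_comm (s := (Finset.univ : Finset (Fin n → Bool))) (t := EF)
                (f := fun s e => if (∃ a b, e = s(a, b) ∧ a ∈ A t s ∧ b ∉ A t s)
                  then w e else 0)
        _ = ∑ e ∈ EF, ∑ t : Bool, ∑ s : Fin n → Bool,
              (if (∃ a b, e = s(a, b) ∧ a ∈ A t s ∧ b ∉ A t s) then w e else 0) :=
            Finset.sum_comm (s := (Finset.univ : Finset Bool)) (t := EF)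
              (f := fun t e => ∑ s : Fin n → Bool,
                if (∃ a b, e = s(a, b) ∧ a ∈ A t s ∧ b ∉ A t s) then w e else 0)
    have h2 : ∑ e ∈ EF, ((2 ^ n : ℝ) * w e
          + (if e ∈ DF then (2 ^ (n - 1) : ℝ) * w e else 0))
        ≤ ∑ e ∈ EF, ∑ t : Bool, ∑ s : Fin n → Bool,
            (if (∃ a b, e = s(a, b) ∧ a ∈ A t s ∧ b ∉ A t s) then w e else 0) :=
      Finset.sum_le_sum perEdge
    have h3 : ∑ e ∈ EF, ((2 ^ n : ℝ) * w e
          + (if e ∈ DF then (2 ^ (n - 1) : ℝ) * w e else 0))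
        = (2 ^ n : ℝ) * totalWeight G w + (2 ^ (n - 1) : ℝ) * totalWeight D w := by
      rw [Finset.sum_add_distrib, ← Finset.mul_sum, ← hTW]
      congr 1
      rw [Finset.sum_ite_mem, Finset.inter_eq_right.mpr hDFEF, ← Finset.mul_sum, ← hTWD]
    rw [h1]
    rw [h3] at h2
    exact h2
  -- conclude by averaging
  by_contra hcon
  push_neg at hcon
  have hlt : ∑ t : Bool, ∑ s : Fin n → Bool, cutWeight G w (A t s)
      < ∑ t : Bool, ∑ s : Fin n → Bool,
          (totalWeight G w / 2 + totalWeight D w / 4) := by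
    refine Finset.sum_lt_sum_of_nonempty Finset.univ_nonempty fun t _ => ?_
    exact Finset.sum_lt_sum_of_nonempty Finset.univ_nonempty fun s _ => hcon (A t s)
  have hconst : ∑ t : Bool, ∑ s : Fin n → Bool,
        (totalWeight G w / 2 + totalWeight D w / 4)
      = (2 * 2 ^ n : ℝ) * (totalWeight G w / 2 + totalWeight D w / 4) := by
    rw [Finset.sum_const, Finset.sum_const, Finset.card_univ, Finset.card_univ,
      smul_smul, nsmul_eq_mul]
    push_cast [Fintype.card_fun, Fintype.card_bool, Fintype.card_fin]
    ring
  have h2n : (2 : ℝ) ^ n = 2 * 2 ^ (n - 1) := by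
    have hm : n = (n - 1) + 1 := by omega
    rw [hm, Nat.add_sub_cancel, pow_succ]; ring
  have hfin : (2 * 2 ^ n : ℝ) * (totalWeight G w / 2 + totalWeight D w / 4)
      = (2 ^ n : ℝ) * totalWeight G w + (2 ^ (n - 1) : ℝ) * totalWeight D w := by
    rw [h2n]; ring
  rw [hconst, hfin] at hlt
  linarith [keyIneq, hlt]

end MaxCut
end

section
/- For every ε > 0 there exists a connected weighted graph G with nonnegative edge weights and a spanning tree T of G such that mac(G) < w(G)/2 + ε·w(T). -/
namespace MaxCut

/-!
Take the complete graph on `m + 1` vertices with a hub `c`: edges at `c` weigh `t = 2εm`, all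
other edges weigh `1`, and `T` is the star at `c`. If the side of a cut avoiding `c` has `a`
vertices, the cut weighs `a (t + m - a) ≤ (m + t)² / 4`, whereas
`w(G)/2 + ε w(T) = mt/2 + m(m - 1)/4 + t²/2` exceeds this by `(t² - m)/4`, which is positive
once `4ε²m > 1`.
-/

open Finset SimpleGraph

variable {V : Type*}

lemma cutWeight_compl (G : SimpleGraph V) (w : Sym2 V → ℝ) (A : Set V) :
    cutWeight G w Aᶜ = cutWeight G w A := by
  have hcross : {e ∈ G.edgeSet | ∃ x y, e = s(x, y) ∧ x ∈ Aᶜ ∧ y ∉ Aᶜ}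
      = {e ∈ G.edgeSet | ∃ x y, e = s(x, y) ∧ x ∈ A ∧ y ∉ A} := by
    ext e
    constructor <;>
    · rintro ⟨he, x, y, rfl, hx, hy⟩
      exact ⟨he, y, x, Sym2.eq_swap, by simpa using hy, by simpa using hx⟩
  rw [cutWeight, cutWeight, hcross]

lemma cutWeight_top_eq_sum [Fintype V] [DecidableEq V] (w : Sym2 V → ℝ) (A : Finset V) :
    cutWeight ⊤ w ↑A = ∑ x ∈ A, ∑ y ∈ Aᶜ, w s(x, y) := by
  have hcut : {e ∈ (⊤ : SimpleGraph V).edgeSet |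
      ∃ x y, e = s(x, y) ∧ x ∈ (A : Set V) ∧ y ∉ (A : Set V)} =
      ↑((A ×ˢ Aᶜ).image fun p => s(p.1, p.2)) := by
    ext e
    simp only [Set.mem_ofPred_eq, coe_image, Set.mem_image, mem_coe, mem_product, mem_compl]
    constructor
    · rintro ⟨-, x, y, rfl, hx, hy⟩
      exact ⟨(x, y), ⟨hx, hy⟩, rfl⟩
    · rintro ⟨⟨x, y⟩, ⟨hx, hy⟩, rfl⟩
      exact ⟨fun h => hy (Sym2.mk_isDiag_iff.mp h ▸ hx), x, y, rfl, hx, hy⟩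
  have hinj : Set.InjOn (fun p : V × V => s(p.1, p.2)) ↑(A ×ˢ Aᶜ) := by
    rintro ⟨x, y⟩ hxy ⟨x', y'⟩ hxy' h
    simp only [mem_coe, mem_product, mem_compl] at hxy hxy'
    rcases Sym2.eq_iff.mp h with ⟨rfl, rfl⟩ | ⟨rfl, rfl⟩
    · rfl
    · exact absurd hxy.1 hxy'.2
  rw [cutWeight, hcut, finsum_mem_coe_finset, sum_image hinj, sum_product]

lemma totalWeight_eq_sum_edgeFinset (G : SimpleGraph V) [Fintype G.edgeSet]
    (w : Sym2 V → ℝ) : totalWeight G w = ∑ e ∈ G.edgeFinset, w e := by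
  rw [totalWeight, ← coe_edgeFinset, finsum_mem_coe_finset]

section Hub

variable [DecidableEq V]

def hubWeight (c : V) (t : ℝ) (e : Sym2 V) : ℝ := if c ∈ e then t else 1

lemma hubWeight_nonneg {c : V} {t : ℝ} (ht : 0 ≤ t) (e : Sym2 V) : 0 ≤ hubWeight c t e := by
  unfold hubWeight
  split_ifs <;> linarith

variable [Fintype V]

lemma totalWeight_hubWeight (G : SimpleGraph V) [DecidableRel G.Adj] (c : V) (t : ℝ) :
    totalWeight G (hubWeight c t) = G.degree c * t + #{e ∈ G.edgeFinset | c ∉ e} := by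
  rw [totalWeight_eq_sum_edgeFinset]
  unfold hubWeight
  rw [sum_ite, sum_const, sum_const, ← incidenceFinset_eq_filter, card_incidenceFinset_eq_degree]
  simp

lemma totalWeight_starGraph_hubWeight {m : ℕ} (hV : Fintype.card V = m + 1) (c : V) (t : ℝ) :
    totalWeight (starGraph c) (hubWeight c t) = m * t := by
  have hcenter : ∀ e ∈ (starGraph c).edgeFinset, c ∈ e := by
    intro e he
    induction e using Sym2.ind with
    | h x y =>
      rcases (starGraph_adj.mp (mem_edgeFinset.mp he)).2 with rfl | rfl
      · exact Sym2.mem_mk_left _ _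
      · exact Sym2.mem_mk_right _ _
  rw [totalWeight_hubWeight, degree_starGraph_center, hV, filter_false_of_mem fun e he h =>
    h (hcenter e he)]
  simp

lemma totalWeight_top_hubWeight {m : ℕ} (hV : Fintype.card V = m + 1) (c : V) (t : ℝ) :
    totalWeight ⊤ (hubWeight c t) = m * t + m.choose 2 := by
  have hrest : #{e ∈ (⊤ : SimpleGraph V).edgeFinset | c ∉ e} = m.choose 2 := by
    have hsplit := card_filter_add_card_filter_not
      (s := (⊤ : SimpleGraph V).edgeFinset) (p := fun e => c ∈ e)
    rw [← incidenceFinset_eq_filter, card_incidenceFinset_eq_degree, complete_graph_degree,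
      card_edgeFinset_top_eq_card_choose_two, hV, Nat.choose_succ_succ, Nat.choose_one_right]
      at hsplit
    simpa using hsplit
  rw [totalWeight_hubWeight, complete_graph_degree, hV, hrest]
  simp

lemma cutWeight_top_hubWeight_of_notMem {m : ℕ} (hV : Fintype.card V = m + 1) {c : V}
    {A : Finset V} (hc : c ∉ A) (t : ℝ) :
    cutWeight ⊤ (hubWeight c t) ↑A = #A * (t + (m - #A)) := by
  have hcompl : (#Aᶜ : ℝ) = m + 1 - #A := by
    rw [eq_sub_iff_add_eq', ← Nat.cast_add, card_add_card_compl, hV, Nat.cast_succ]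
  have hrow : ∀ x ∈ A, ∑ y ∈ Aᶜ, hubWeight c t s(x, y) = t + (m - #A) := by
    intro x hx
    have hxc : c ≠ x := (ne_of_mem_of_not_mem hx hc).symm
    calc ∑ y ∈ Aᶜ, hubWeight c t s(x, y)
        = ∑ y ∈ Aᶜ, (1 + if c = y then t - 1 else 0) := by
          refine sum_congr rfl fun y _ => ?_
          by_cases hy : c = y <;> simp [hubWeight, hxc, hy]
      _ = t + (m - #A) := by
          rw [sum_add_distrib, sum_ite_eq, if_pos (mem_compl.mpr hc), sum_const, nsmul_one,
            hcompl]
          ring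
  rw [cutWeight_top_eq_sum, sum_congr rfl hrow, sum_const, nsmul_eq_mul]

lemma cutWeight_top_hubWeight_le {m : ℕ} (hV : Fintype.card V = m + 1) (c : V) (t : ℝ)
    (A : Set V) : cutWeight ⊤ (hubWeight c t) A ≤ ((m + t) / 2) ^ 2 := by
  classical
  wlog hc : c ∉ A generalizing A
  · rw [← cutWeight_compl]
    exact this Aᶜ (by simpa using hc)
  rw [← Set.coe_toFinset A, cutWeight_top_hubWeight_of_notMem hV (by simpa using hc)]
  nlinarith [four_mul_le_sq_add (#A.toFinset : ℝ) (t + (m - #A.toFinset))]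

end Hub

lemma hub_cut_bound_lt {ε m : ℝ} (hm : 1 < 4 * ε ^ 2 * m) :
    ((m + 2 * ε * m) / 2) ^ 2 <
      (m * (2 * ε * m) + m * (m - 1) / 2) / 2 + ε * (m * (2 * ε * m)) := by
  have hmpos : 0 < m := by nlinarith [sq_nonneg ε]
  nlinarith

/-- For every `ε > 0` there is a connected weighted graph `G` with a spanning
tree `T` such that `mac(G) < w(G)/2 + ε·w(T)`. -/
theorem exists_graph_maxcut_lt {ε : ℝ} (hε : 0 < ε) :
    ∃ (n : ℕ) (G T : SimpleGraph (Fin n)) (w : Sym2 (Fin n) → ℝ),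
      (∀ e, 0 ≤ w e) ∧ G.Connected ∧ IsSpanningTree G T ∧
      ∀ A : Set (Fin n),
        cutWeight G w A < totalWeight G w / 2 + ε * totalWeight T w := by
  obtain ⟨m, hm⟩ := exists_nat_gt (1 / (4 * ε ^ 2))
  rw [div_lt_iff₀ (by positivity), mul_comm] at hm
  have hV : Fintype.card (Fin (m + 1)) = m + 1 := Fintype.card_fin _
  refine ⟨m + 1, ⊤, starGraph 0, hubWeight 0 (2 * ε * m), hubWeight_nonneg (by positivity),
    connected_top, ⟨le_top, isTree_starGraph 0⟩, fun A => ?_⟩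
  rw [totalWeight_top_hubWeight hV, totalWeight_starGraph_hubWeight hV, Nat.cast_choose_two]
  exact (cutWeight_top_hubWeight_le hV 0 _ A).trans_lt (hub_cut_bound_lt hm)

end MaxCut
end

section
/- Let G be a connected weighted graph with nonnegative edge weights and let M be a matching of G. Then mac(G) ≥ (w(G) + w(M))/2. -/
namespace MaxCut

open Finset in
private lemma count_half {V : Type*} [Fintype V] [DecidableEq V] {u v : V} (huv : u ≠ v)
    (sa sb : Bool) :
    (Finset.univ : Finset (V → Bool)).card ≤
      2 * (Finset.univ.filter (fun f : V → Bool => ¬((f u = sa) ↔ (f v = sb)))).card := by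
  classical
  have hmaps : ∀ f ∈ Finset.univ.filter (fun f : V → Bool => ((f u = sa) ↔ (f v = sb))),
      Function.update f v (!(f v)) ∈
        Finset.univ.filter (fun f : V → Bool => ¬((f u = sa) ↔ (f v = sb))) := by
    intro f hf
    simp only [mem_filter, mem_univ, true_and] at hf ⊢
    rw [Function.update_of_ne huv, Function.update_self]
    intro h
    cases hfv : f v <;> cases sb <;> simp_all
  have hinj : Set.InjOn (fun f : V → Bool => Function.update f v (!(f v)))
      ↑(Finset.univ.filter (fun f : V → Bool => ((f u = sa) ↔ (f v = sb)))) := by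
    intro f _ g _ h
    funext x
    by_cases hx : x = v
    · subst hx
      have h2 := congrFun h x
      simpa [Function.update] using h2
    · have h2 := congrFun h x
      simpa [Function.update, hx] using h2
  have hcard := Finset.card_le_card_of_injOn _ hmaps hinj
  have hsplit := Finset.card_filter_add_card_filter_not
      (s := (Finset.univ : Finset (V → Bool)))
      (fun f : V → Bool => ((f u = sa) ↔ (f v = sb)))
  rw [← hsplit, two_mul]; exact Nat.add_le_add_right hcard _

lemma bool_fact : ∀ x sa sb : Bool, x ≠ sa → sa ≠ sb → x = sb := by decide

set_option maxHeartbeats 1000000 in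
/-- If `M` is a matching of `G`, then `mac(G) ≥ (w(G) + w(M))/2`. -/
theorem maxcut_ge_of_matching {V : Type*} [Fintype V] (G : SimpleGraph V)
    (w : Sym2 V → ℝ) (hw : ∀ e, 0 ≤ w e) (hG : G.Connected)
    (M : Set (Sym2 V)) (hM : IsMatching G M) :
    ∃ A : Set V, (totalWeight G w + setWeight w M) / 2 ≤ cutWeight G w A := by
  classical
  obtain ⟨hME, hMdisj⟩ := hM
  -- endpoints of an edge
  have hrep : ∀ e : Sym2 V, ∃ p : V × V, e = s(p.1, p.2) := fun e =>
    Sym2.ind (fun x y => ⟨(x, y), rfl⟩) e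
  set fst : Sym2 V → V := fun e => (hrep e).choose.1 with hfst
  set snd : Sym2 V → V := fun e => (hrep e).choose.2 with hsnd
  have hfs : ∀ e : Sym2 V, e = s(fst e, snd e) := fun e => (hrep e).choose_spec
  have hmemf : ∀ e : Sym2 V, fst e ∈ e := by
    intro e; have h := Sym2.mem_mk_left (fst e) (snd e); rwa [← hfs e] at h
  have hmems : ∀ e : Sym2 V, snd e ∈ e := by
    intro e; have h := Sym2.mem_mk_right (fst e) (snd e); rwa [← hfs e] at h
  -- matching structure
  set matched : V → Prop := fun v => ∃ e ∈ M, v ∈ e with hmatchdef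
  set ed : V → Sym2 V := fun v => if h : matched v then h.choose else s(v, v) with hed
  have hedspec : ∀ v, matched v → ed v ∈ M ∧ v ∈ ed v := by
    intro v hv
    simp only [hed, dif_pos hv]
    exact ⟨hv.choose_spec.1, hv.choose_spec.2⟩
  have hedunique : ∀ v e, e ∈ M → v ∈ e → ed v = e := by
    intro v e heM hve
    have hv : matched v := ⟨e, heM, hve⟩
    obtain ⟨h1, h2⟩ := hedspec v hv
    by_contra hne
    exact hMdisj _ h1 _ heM hne v ⟨h2, hve⟩
  set rep : V → V := fun v => if h : matched v then fst (ed v) else v with hrepdef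
  have hrep_pos : ∀ v, matched v → rep v = fst (ed v) := fun v h => dif_pos h
  have hrep_neg : ∀ v, ¬matched v → rep v = v := fun v h => dif_neg h
  set sec : V → Bool := fun v => decide (v ≠ rep v) with hsecdef
  set A : (V → Bool) → Set V := fun f => {v | f (rep v) = sec v} with hA
  -- basic facts about edges of G
  have hEfin : G.edgeSet.Finite := Set.toFinite _
  have hMfin : M.Finite := Set.toFinite _
  set Efin := hEfin.toFinset with hEfinDef
  set Mfin := hMfin.toFinset with hMfinDef
  have hMsubE : Mfin ⊆ Efin := by
    intro e he
    simp only [hMfinDef, hEfinDef, Set.Finite.mem_toFinset] at he ⊢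
    exact hME he
  have hne_of_mem : ∀ e ∈ G.edgeSet, fst e ≠ snd e := by
    intro e he
    have : ¬ e.IsDiag := G.not_isDiag_of_mem_edgeSet he
    rw [hfs e] at this
    simpa [Sym2.isDiag_iff_proj_eq] using this
  -- cut characterization
  have hcut : ∀ (a b : V) (S : Set V), a ≠ b →
      ((∃ x y, s(a, b) = s(x, y) ∧ x ∈ S ∧ y ∉ S) ↔ ((a ∈ S ∧ b ∉ S) ∨ (b ∈ S ∧ a ∉ S))) := by
    intro a b S hab
    constructor
    · rintro ⟨x, y, hxy, hx, hy⟩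
      rw [Sym2.eq_iff] at hxy
      rcases hxy with ⟨rfl, rfl⟩ | ⟨rfl, rfl⟩
      · exact Or.inl ⟨hx, hy⟩
      · exact Or.inr ⟨hx, hy⟩
    · rintro (⟨h1, h2⟩ | ⟨h1, h2⟩)
      · exact ⟨a, b, rfl, h1, h2⟩
      · exact ⟨b, a, Sym2.eq_swap, h1, h2⟩
  -- matching edges: reps of endpoints agree, secs differ
  have hMedge : ∀ e ∈ M, rep (fst e) = rep (snd e) ∧ sec (fst e) ≠ sec (snd e) := by
    intro e heM
    have heE := hME heM
    have hab := hne_of_mem e heE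
    have hma : matched (fst e) := ⟨e, heM, hmemf e⟩
    have hmb : matched (snd e) := ⟨e, heM, hmems e⟩
    have heda : ed (fst e) = e := hedunique _ _ heM (hmemf e)
    have hedb : ed (snd e) = e := hedunique _ _ heM (hmems e)
    have hra : rep (fst e) = fst e := by rw [hrep_pos _ hma, heda]
    have hrb : rep (snd e) = fst e := by rw [hrep_pos _ hmb, hedb]
    refine ⟨by rw [hra, hrb], ?_⟩
    simp only [hsecdef, hra, hrb]
    simp [hab, (Ne.symm hab)]
  -- non-matching edges: reps differ
  have hreps : ∀ e ∈ G.edgeSet, e ∉ M → rep (fst e) ≠ rep (snd e) := by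
    intro e heE heM
    have hab := hne_of_mem e heE
    intro hcontra
    by_cases hma : matched (fst e) <;> by_cases hmb : matched (snd e)
    · obtain ⟨ha1, ha2⟩ := hedspec _ hma
      obtain ⟨hb1, hb2⟩ := hedspec _ hmb
      have hra : rep (fst e) = fst (ed (fst e)) := hrep_pos _ hma
      have hrb : rep (snd e) = fst (ed (snd e)) := hrep_pos _ hmb
      by_cases hee : ed (fst e) = ed (snd e)
      · have hb2' : snd e ∈ ed (fst e) := hee ▸ hb2
        have heq : ed (fst e) = s(fst e, snd e) := by
          rw [hfs (ed (fst e))] at ha2 hb2'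
          rw [Sym2.mem_iff] at ha2 hb2'
          rw [hfs (ed (fst e))]
          rcases ha2 with h1 | h1 <;> rcases hb2' with h2 | h2
          · exact absurd (h1 ▸ h2) hab.symm
          · rw [← h1, ← h2]
          · rw [← h1, ← h2]; exact Sym2.eq_swap
          · exact absurd (h2 ▸ h1) hab
        have : e ∈ M := by rw [← hfs e] at heq; rw [← heq]; exact ha1
        exact heM this
      · have hmem1 : rep (fst e) ∈ ed (fst e) := by rw [hra]; exact hmemf _
        have hmem2 : rep (fst e) ∈ ed (snd e) := by rw [hcontra, hrb]; exact hmemf _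
        exact hMdisj _ ha1 _ hb1 hee (rep (fst e)) ⟨hmem1, hmem2⟩
    · obtain ⟨ha1, _⟩ := hedspec _ hma
      have hrb : rep (snd e) = snd e := hrep_neg _ hmb
      have hra : rep (fst e) = fst (ed (fst e)) := hrep_pos _ hma
      have : snd e ∈ ed (fst e) := by rw [← hrb, ← hcontra, hra]; exact hmemf _
      exact hmb ⟨ed (fst e), ha1, this⟩
    · obtain ⟨hb1, _⟩ := hedspec _ hmb
      have hra : rep (fst e) = fst e := hrep_neg _ hma
      have hrb : rep (snd e) = fst (ed (snd e)) := hrep_pos _ hmb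
      have : fst e ∈ ed (snd e) := by rw [← hra, hcontra, hrb]; exact hmemf _
      exact hma ⟨ed (snd e), hb1, this⟩
    · rw [hrep_neg _ hma, hrep_neg _ hmb] at hcontra
      exact hab hcontra
  -- cut weight as a finite sum over edges
  have hcutW : ∀ f : V → Bool, cutWeight G w (A f) =
      ∑ e ∈ Efin, if (∃ x y, e = s(x, y) ∧ x ∈ A f ∧ y ∉ A f) then w e else 0 := by
    intro f
    rw [cutWeight]
    rw [finsum_mem_eq_finite_toFinset_sum _ (Set.toFinite _)]
    rw [← Finset.sum_filter]
    apply Finset.sum_congr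
    · ext e
      simp only [Set.Finite.mem_toFinset, Set.mem_setOf_eq, Finset.mem_filter, hEfinDef]
    · intros; rfl
  -- cut predicate in terms of endpoints
  set cut : Sym2 V → (V → Bool) → Prop := fun e f => ∃ x y, e = s(x, y) ∧ x ∈ A f ∧ y ∉ A f
    with hcutdef
  have hcut' : ∀ e : Sym2 V, fst e ≠ snd e → ∀ f : V → Bool,
      (cut e f ↔ ((fst e ∈ A f ∧ snd e ∉ A f) ∨ (snd e ∈ A f ∧ fst e ∉ A f))) := by
    intro e hab f
    constructor
    · rintro ⟨x, y, hxy, hx, hy⟩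
      rw [hfs e, Sym2.eq_iff] at hxy
      rcases hxy with ⟨rfl, rfl⟩ | ⟨rfl, rfl⟩
      · exact Or.inl ⟨hx, hy⟩
      · exact Or.inr ⟨hx, hy⟩
    · rintro (⟨h1, h2⟩ | ⟨h1, h2⟩)
      · exact ⟨fst e, snd e, hfs e, h1, h2⟩
      · exact ⟨snd e, fst e, (hfs e).trans Sym2.eq_swap, h1, h2⟩
  have hAmem : ∀ (f : V → Bool) (v : V), v ∈ A f ↔ f (rep v) = sec v := fun f v => Iff.rfl
  set c : Sym2 V → ℕ := fun e => (Finset.univ.filter (fun f : V → Bool => cut e f)).card with hc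
  set N : ℕ := (Finset.univ : Finset (V → Bool)).card with hN
  -- matching edges are always cut
  have hcM : ∀ e ∈ Mfin, c e = N := by
    intro e he
    rw [hMfinDef, Set.Finite.mem_toFinset] at he
    have heE := hME he
    have hab := hne_of_mem e heE
    obtain ⟨hr, hs⟩ := hMedge e he
    have hall : ∀ f : V → Bool, cut e f := by
      intro f
      apply (hcut' e hab f).mpr
      by_cases h : f (rep (fst e)) = sec (fst e)
      · left
        refine ⟨h, ?_⟩
        rw [hAmem]
        intro hb
        rw [← hr] at hb
        exact hs (h.symm.trans hb)
      · right
        refine ⟨?_, h⟩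
        rw [hAmem, ← hr]
        exact bool_fact _ _ _ h hs
    have hfl : Finset.univ.filter (fun f : V → Bool => cut e f) = Finset.univ :=
      Finset.filter_true_of_mem (fun f _ => hall f)
    simp only [hc]
    rw [hfl]
  -- non-matching edges are cut at least half the time
  have hcE : ∀ e ∈ Efin, e ∉ M → N ≤ 2 * c e := by
    intro e he heM
    rw [hEfinDef, Set.Finite.mem_toFinset] at he
    have hab := hne_of_mem e he
    have hr := hreps e he heM
    have hfilt : Finset.univ.filter (fun f : V → Bool => cut e f) =
        Finset.univ.filter (fun f : V → Bool =>
          ¬((f (rep (fst e)) = sec (fst e)) ↔ (f (rep (snd e)) = sec (snd e)))) := by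
      apply Finset.filter_congr
      intro f _
      rw [hcut' e hab f]
      simp only [hAmem]
      tauto
    simp only [hc, hN]
    rw [hfilt]
    exact count_half hr _ _
  -- N/2 ≤ c e for all edges
  have hNle : ∀ e ∈ Efin, (N : ℝ) / 2 ≤ (c e : ℝ) := by
    intro e he
    by_cases heM : e ∈ M
    · have hm : e ∈ Mfin := by rw [hMfinDef, Set.Finite.mem_toFinset]; exact heM
      rw [hcM e hm]
      have : (0:ℝ) ≤ (N:ℝ) := Nat.cast_nonneg _
      linarith
    · have h2c := hcE e he heM
      have : (N:ℝ) ≤ ((2 * c e : ℕ) : ℝ) := Nat.cast_le.mpr h2c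
      push_cast at this
      linarith
  -- sum over all assignments
  have hsum : ∑ f : V → Bool, cutWeight G w (A f) = ∑ e ∈ Efin, (c e : ℝ) * w e := by
    calc ∑ f : V → Bool, cutWeight G w (A f)
        = ∑ f : V → Bool, ∑ e ∈ Efin, if cut e f then w e else 0 :=
          Finset.sum_congr rfl (fun f _ => hcutW f)
      _ = ∑ e ∈ Efin, ∑ f : V → Bool, if cut e f then w e else 0 := Finset.sum_comm
      _ = ∑ e ∈ Efin, (c e : ℝ) * w e := by
          apply Finset.sum_congr rfl
          intro e _
          rw [← Finset.sum_filter, Finset.sum_const, nsmul_eq_mul]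
  -- key inequality
  have hterm : ∀ e ∈ Efin, 0 ≤ ((c e : ℝ) - (N:ℝ)/2) * w e := by
    intro e he
    exact mul_nonneg (by linarith [hNle e he]) (hw e)
  have key : (N : ℝ) / 2 * (∑ e ∈ Efin, w e + ∑ e ∈ Mfin, w e) ≤
      ∑ e ∈ Efin, (c e : ℝ) * w e := by
    have e1 : ∑ e ∈ Efin, (c e : ℝ) * w e
        = ∑ e ∈ Efin, (N:ℝ)/2 * w e + ∑ e ∈ Efin, ((c e:ℝ) - (N:ℝ)/2) * w e := by
      rw [← Finset.sum_add_distrib]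
      exact Finset.sum_congr rfl (fun e _ => by ring)
    have e2 : ∑ e ∈ Mfin, ((c e:ℝ) - (N:ℝ)/2) * w e = ∑ e ∈ Mfin, (N:ℝ)/2 * w e := by
      apply Finset.sum_congr rfl
      intro e he
      rw [hcM e he]
      ring
    have e3 : ∑ e ∈ Mfin, ((c e:ℝ) - (N:ℝ)/2) * w e ≤
        ∑ e ∈ Efin, ((c e:ℝ) - (N:ℝ)/2) * w e :=
      Finset.sum_le_sum_of_subset_of_nonneg hMsubE (fun e he _ => hterm e he)
    rw [mul_add, Finset.mul_sum, Finset.mul_sum, e1]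
    linarith
  -- averaging
  have hTW : totalWeight G w = ∑ e ∈ Efin, w e := by
    rw [totalWeight, finsum_mem_eq_finite_toFinset_sum _ hEfin]
  have hSW : setWeight w M = ∑ e ∈ Mfin, w e := by
    rw [setWeight, finsum_mem_eq_finite_toFinset_sum _ hMfin]
  have htotal : ∑ _f : V → Bool, ((totalWeight G w + setWeight w M) / 2) ≤
      ∑ f : V → Bool, cutWeight G w (A f) := by
    rw [Finset.sum_const, nsmul_eq_mul, hsum, hTW, hSW, ← hN]
    have : (N:ℝ) * ((∑ e ∈ Efin, w e + ∑ e ∈ Mfin, w e) / 2)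
        = (N:ℝ)/2 * (∑ e ∈ Efin, w e + ∑ e ∈ Mfin, w e) := by ring
    rw [this]
    exact key
  obtain ⟨f, _, hf⟩ := Finset.exists_le_of_sum_le Finset.univ_nonempty htotal
  exact ⟨A f, hf⟩


end MaxCut
end

section
/- Let k be a positive even integer, let G be a connected weighted graph with nonnegative edge weights whose girth is at least k, and let D be a DFS tree of G. Then mac(G) ≥ w(G)/2 + ((k−1)/(2k))·w(D). -/
namespace MaxCut

/-!
Pick a shift `t < k` and one bit for every block of `k` consecutive depths (the blocks being
offset by `t`), uniformly at random, and colour each vertex by the parity of its depth in `D`,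
flipped by the bit of its block. An edge whose ends lie in different blocks is then cut with
probability `1/2`. Every edge of `G` joins an ancestor to a descendant whose depths differ by `1`
(tree edges) or by at least `k - 1` (any other edge closes a cycle with the tree path), so an edge
inside a single block has odd depth difference, `k` being even, and is always cut. A tree edge
straddles two blocks for only one of the `k` shifts, so it is cut with probability
`1 - 1/(2k) = 1/2 + (k - 1)/(2k)`. Some colouring cuts at least the expected weight.
-/

open Finset SimpleGraph

section BooleanCube

variable {ι : Type*} [Fintype ι] [DecidableEq ι]

lemma card_xor_ne_xor_of_ne {i j : ι} (hij : i ≠ j) (a b : Bool) :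
    2 * #{g : ι → Bool | xor a (g i) ≠ xor b (g j)} = 2 ^ Fintype.card ι := by
  -- flipping the bit at `i` exchanges the set with its complement
  let flip (g : ι → Bool) : ι → Bool := Function.update g i (!g i)
  have hflip : #{g : ι → Bool | xor a (g i) ≠ xor b (g j)} =
      #{g : ι → Bool | ¬ xor a (g i) ≠ xor b (g j)} := by
    refine card_bijective flip (Function.Involutive.bijective fun g => by simp [flip]) fun g => ?_
    simp only [mem_filter, mem_univ, true_and, flip, Function.update_self,
      Function.update_of_ne hij.symm]
    cases a <;> cases b <;> cases g i <;> cases g j <;> simp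
  rw [two_mul]
  nth_rw 2 [hflip]
  rw [card_filter_add_card_filter_not, card_univ, Fintype.card_fun, Fintype.card_bool]

lemma card_xor_ne_xor_self {a b : Bool} (hab : a ≠ b) (i : ι) :
    #{g : ι → Bool | xor a (g i) ≠ xor b (g i)} = 2 ^ Fintype.card ι := by
  rw [filter_true_of_mem fun g _ => by cases a <;> cases b <;> cases g i <;> simp_all,
    card_univ, Fintype.card_fun, Fintype.card_bool]

lemma two_pow_le_two_mul_card_xor_ne_xor {i j : ι} {a b : Bool} (h : i ≠ j ∨ a ≠ b) :
    2 ^ Fintype.card ι ≤ 2 * #{g : ι → Bool | xor a (g i) ≠ xor b (g j)} := by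
  by_cases hij : i = j
  · subst hij
    rw [card_xor_ne_xor_self (h.resolve_left (not_not.2 rfl))]
    omega
  · exact (card_xor_ne_xor_of_ne hij a b).ge

end BooleanCube

section Averaging

variable {V : Type*} (G : SimpleGraph V) (w : Sym2 V → ℝ)

lemma exists_mk_eq_true_ne_true_iff (f : V → Bool) (x y : V) :
    (∃ x' y', s(x, y) = s(x', y') ∧ f x' = true ∧ f y' ≠ true) ↔ f x ≠ f y := by
  constructor
  · rintro ⟨x', y', he, hx, hy⟩
    rcases Sym2.eq_iff.1 he with ⟨rfl, rfl⟩ | ⟨rfl, rfl⟩ <;> simp_all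
  · intro h
    cases hx : f x
    · exact ⟨y, x, Sym2.eq_swap, by simp_all⟩
    · exact ⟨x, y, rfl, hx, by simp_all⟩

theorem exists_le_cutWeight_of_le_card [Finite V] {Ω : Type*} [Fintype Ω] [Nonempty Ω]
    (hw : ∀ e, 0 ≤ w e) (f : Ω → V → Bool) (p : Sym2 V → ℝ)
    (hp : ∀ x y, G.Adj x y → p s(x, y) * Fintype.card Ω ≤ #{ω | f ω x ≠ f ω y}) :
    ∃ ω, ∑ᶠ e ∈ G.edgeSet, p e * w e ≤ cutWeight G w {v | f ω v} := by
  classical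
  have := Fintype.ofFinite V
  have hcut : ∀ ω, cutWeight G w {v | f ω v} = ∑ e ∈ G.edgeFinset,
      if ∃ x y, e = s(x, y) ∧ f ω x = true ∧ f ω y ≠ true then w e else 0 := by
    intro ω
    rw [cutWeight, ← sum_filter, ← finsum_mem_coe_finset, coe_filter]
    simp only [G.mem_edgeFinset, Set.mem_ofPred_eq]
  have hedge : ∀ e ∈ G.edgeFinset, Fintype.card Ω * (p e * w e) ≤
      ∑ ω, if ∃ x y, e = s(x, y) ∧ f ω x = true ∧ f ω y ≠ true then w e else 0 := by
    intro e he
    induction e using Sym2.ind with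
    | h x y =>
      simp only [exists_mk_eq_true_ne_true_iff, ← sum_filter, sum_const, nsmul_eq_mul]
      nlinarith [hp x y (G.mem_edgeFinset.1 he), hw s(x, y)]
  have hsum :
      ∑ _ω : Ω, ∑ᶠ e ∈ G.edgeSet, p e * w e ≤ ∑ ω, cutWeight G w {v | f ω v} := by
    simp only [hcut, sum_const, card_univ, nsmul_eq_mul,
      ← G.coe_edgeFinset, finsum_mem_coe_finset, mul_sum]
    rw [sum_comm]
    exact sum_le_sum hedge
  obtain ⟨ω, -, hω⟩ := exists_le_of_sum_le univ_nonempty hsum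
  exact ⟨ω, hω⟩

end Averaging

lemma card_dvd_add_succ_le_one (k a : ℕ) : #{t : Fin k | k ∣ a + t + 1} ≤ 1 := by
  refine card_le_one.2 fun t ht t' ht' => Fin.ext ?_
  simp only [mem_filter, mem_univ, true_and] at ht ht'
  have h : a + 1 + t ≡ a + 1 + t' [MOD k] :=
    ((Nat.modEq_zero_iff_dvd.2 (by simpa [add_right_comm] using ht)).trans
      (Nat.modEq_zero_iff_dvd.2 (by simpa [add_right_comm] using ht')).symm)
  exact (Nat.ModEq.add_left_cancel' _ h).eq_of_lt_of_lt t.2 t'.2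

lemma add_div_lt_add_div_of_le {k ℓ : ℕ} (hk : 0 < k) (hℓ : k ≤ ℓ) (a : ℕ) :
    a / k < (a + ℓ) / k :=
  calc a / k < a / k + 1 := Nat.lt_succ_self _
    _ = (a + k) / k := (Nat.add_div_right a hk).symm
    _ ≤ (a + ℓ) / k := Nat.div_le_div_right (by omega)

section ShiftedBlocks

variable {V : Type*} {n k : ℕ} (depth : V → Fin n)

def shiftedBlock (t : Fin k) (v : V) : Fin (n + k) :=
  ⟨(depth v + t) / k, (Nat.div_le_self _ _).trans_lt (Nat.add_lt_add (depth v).2 t.2)⟩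

def blockColoring (k : ℕ) (depth : V → Fin n) (ω : Fin k × (Fin (n + k) → Bool)) (v : V) :
    Bool :=
  xor (decide (Odd (depth v : ℕ))) (ω.2 (shiftedBlock depth ω.1 v))

variable {depth}

lemma card_blockColoring_ne (x y : V) :
    #{ω | blockColoring k depth ω x ≠ blockColoring k depth ω y} =
      ∑ t, #{g : Fin (n + k) → Bool |
        xor (decide (Odd (depth x : ℕ))) (g (shiftedBlock depth t x)) ≠
          xor (decide (Odd (depth y : ℕ))) (g (shiftedBlock depth t y))} := by
  rw [card_filter, Fintype.sum_prod_type]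
  simp only [card_filter, blockColoring]
  rfl

lemma shiftedBlock_ne_of_le {x y : V} {ℓ : ℕ} (hk : 0 < k) (hxy : depth x + ℓ = depth y)
    (hℓ : k ≤ ℓ) (t : Fin k) : shiftedBlock depth t x ≠ shiftedBlock depth t y := by
  refine Fin.ne_of_lt (Fin.mk_lt_mk.2 ?_)
  rw [← hxy, add_right_comm]
  exact add_div_lt_add_div_of_le hk hℓ _

lemma card_shiftedBlock_ne_le_one {x y : V} (hxy : (depth x : ℕ) + 1 = depth y) :
    #{t : Fin k | shiftedBlock depth t x ≠ shiftedBlock depth t y} ≤ 1 := by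
  refine (card_le_card (monotone_filter_right _ fun t _ h => ?_)).trans
    (card_dvd_add_succ_le_one k (depth x))
  by_contra hdvd
  apply h
  simp only [shiftedBlock, ← hxy, add_right_comm _ 1, Nat.succ_div, if_neg hdvd,
    add_zero]

theorem le_two_mul_card_blockColoring_ne {x y : V} {ℓ : ℕ} (hk : 0 < k)
    (hxy : depth x + ℓ = depth y) (hodd : ℓ < k → Odd ℓ) :
    k * 2 ^ (n + k) ≤ 2 * #{ω | blockColoring k depth ω x ≠ blockColoring k depth ω y} := by
  have hsep : ∀ t : Fin k, shiftedBlock depth t x ≠ shiftedBlock depth t y ∨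
      decide (Odd (depth x : ℕ)) ≠ decide (Odd (depth y : ℕ)) := by
    by_cases hℓ : k ≤ ℓ
    · exact fun t => .inl (shiftedBlock_ne_of_le hk hxy hℓ t)
    · refine fun _ => .inr ?_
      rw [← hxy]
      simp [Nat.even_add, Nat.not_even_iff_odd.2 (hodd (not_le.1 hℓ)), ← Nat.not_even_iff_odd]
  rw [card_blockColoring_ne, mul_sum]
  calc k * 2 ^ (n + k) = ∑ _t : Fin k, 2 ^ Fintype.card (Fin (n + k)) := by simp
    _ ≤ _ := sum_le_sum fun t _ => two_pow_le_two_mul_card_xor_ne_xor (hsep t)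

theorem le_two_mul_card_blockColoring_ne_add_of_succ {x y : V}
    (hxy : (depth x : ℕ) + 1 = depth y) :
    2 * k * 2 ^ (n + k) ≤
      2 * #{ω | blockColoring k depth ω x ≠ blockColoring k depth ω y} + 2 ^ (n + k) := by
  have hpar : decide (Odd (depth x : ℕ)) ≠ decide (Odd (depth y : ℕ)) := by
    simp [← hxy, Nat.odd_add_one, ← Nat.not_even_iff_odd]
  have hstep : ∀ t : Fin k, 2 * 2 ^ (n + k) ≤
      2 * #{g : Fin (n + k) → Bool |
        xor (decide (Odd (depth x : ℕ))) (g (shiftedBlock depth t x)) ≠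
          xor (decide (Odd (depth y : ℕ))) (g (shiftedBlock depth t y))} +
      if shiftedBlock depth t x ≠ shiftedBlock depth t y then 2 ^ (n + k) else 0 := by
    intro t
    by_cases h : shiftedBlock depth t x = shiftedBlock depth t y
    · rw [h, card_xor_ne_xor_self hpar, Fintype.card_fin]
      simp
    · have := two_pow_le_two_mul_card_xor_ne_xor (i := shiftedBlock depth t x)
        (j := shiftedBlock depth t y) (.inr hpar)
      rw [Fintype.card_fin] at this
      rw [if_pos h]
      omega
  calc 2 * k * 2 ^ (n + k) = ∑ _t : Fin k, 2 * 2 ^ (n + k) := by simp [mul_comm, mul_assoc]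
    _ ≤ _ := sum_le_sum fun t _ => hstep t
    _ = 2 * #{ω | blockColoring k depth ω x ≠ blockColoring k depth ω y} +
          #{t : Fin k | shiftedBlock depth t x ≠ shiftedBlock depth t y} * 2 ^ (n + k) := by
      rw [sum_add_distrib, ← mul_sum, ← card_blockColoring_ne, ← sum_filter, sum_const,
        smul_eq_mul]
    _ ≤ _ := by gcongr; simpa using card_shiftedBlock_ne_le_one hxy

end ShiftedBlocks

section Distance

variable {V : Type*} {G H : SimpleGraph V}

lemma dist_lt_card [Fintype V] (u v : V) : G.dist u v < Fintype.card V := by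
  by_cases h : G.Reachable u v
  · obtain ⟨p, hp, hlen⟩ := h.exists_path_of_dist
    exact hlen ▸ hp.length_lt
  · rw [dist_eq_zero_of_not_reachable h]
    exact Fintype.card_pos_iff.2 ⟨u⟩

lemma egirth_le_dist_add_one (hHG : H ≤ G) {x y : V} (hreach : H.Reachable y x) (hxy : G.Adj x y)
    (hnxy : ¬ H.Adj x y) : G.egirth ≤ H.dist x y + 1 := by
  obtain ⟨p, hp, hlen⟩ := hreach.exists_path_of_dist
  have hnotin : s(x, y) ∉ (p.mapLe hHG).edges := by
    rw [Walk.edges_mapLe_eq_edges]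
    exact fun h => hnxy (p.adj_of_mem_edges h)
  have hcyc : (Walk.cons hxy (p.mapLe hHG)).IsCycle :=
    (Walk.cons_isCycle_iff _ hxy).2 ⟨hp.mapLe hHG, hnotin⟩
  calc G.egirth ≤ (Walk.cons hxy (p.mapLe hHG)).length := egirth_le_length hcyc
    _ = H.dist x y + 1 := by simp [hlen, dist_comm]

end Distance

lemma finsum_edgeSet_half_add_indicator_mul {V : Type*} [Finite V] {G H : SimpleGraph V}
    (hHG : H ≤ G) (w : Sym2 V → ℝ) (c : ℝ) :
    ∑ᶠ e ∈ G.edgeSet, (1 / 2 + H.edgeSet.indicator (fun _ => c) e) * w e =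
      totalWeight G w / 2 + c * totalWeight H w := by
  classical
  have := Fintype.ofFinite V
  simp only [totalWeight, ← coe_edgeFinset, finsum_mem_coe_finset, add_mul, sum_add_distrib,
    ← Set.indicator_mul_left, sum_indicator_subset _ (edgeFinset_mono hHG), ← mul_sum]
  ring

section DFSTree

variable {V : Type*} {G D : SimpleGraph V} {k : ℕ}

lemma odd_dist_of_lt_of_le_egirth (hDG : D ≤ G) (hD : D.Connected) (hke : Even k)
    (hgirth : (k : ℕ∞) ≤ G.egirth) {x y : V} (hxy : G.Adj x y) (hlt : D.dist x y < k) :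
    Odd (D.dist x y) := by
  by_cases hadj : D.Adj x y
  · rw [dist_eq_one_iff_adj.2 hadj]
    exact odd_one
  · have hle : k ≤ D.dist x y + 1 := by
      exact_mod_cast hgirth.trans (egirth_le_dist_add_one hDG (hD.preconnected y x) hxy hadj)
    obtain ⟨j, rfl⟩ := hke
    exact Nat.odd_iff.2 (by omega)

variable [Fintype V]

noncomputable def depth (D : SimpleGraph V) (r v : V) : Fin (Fintype.card V) :=
  ⟨D.dist r v, dist_lt_card r v⟩

theorem mul_card_le_card_blockColoring_ne_of_ancestor {r : V} (hk : 0 < k) (hke : Even k)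
    (hgirth : (k : ℕ∞) ≤ G.egirth) (hDG : D ≤ G) (hD : D.Connected) {x y : V}
    (hxy : G.Adj x y) (hanc : D.dist r x + D.dist x y = D.dist r y) :
    (1 / 2 + D.edgeSet.indicator (fun _ => ((k : ℝ) - 1) / (2 * k)) s(x, y)) *
        Fintype.card (Fin k × (Fin (Fintype.card V + k) → Bool)) ≤
      #{ω | blockColoring k (depth D r) ω x ≠ blockColoring k (depth D r) ω y} := by
  simp only [Fintype.card_prod, Fintype.card_fin, Fintype.card_fun, Fintype.card_bool]
  by_cases hadj : D.Adj x y
  · rw [dist_eq_one_iff_adj.2 hadj] at hanc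
    have h := (Nat.cast_le (α := ℝ)).2
      (le_two_mul_card_blockColoring_ne_add_of_succ (k := k) (depth := depth D r) hanc)
    rw [Set.indicator_of_mem (D.mem_edgeSet.2 hadj)]
    field_simp
    push_cast at h ⊢
    linarith [mul_le_mul_of_nonneg_left h (Nat.cast_nonneg (α := ℝ) k)]
  · have h := (Nat.cast_le (α := ℝ)).2 (le_two_mul_card_blockColoring_ne (depth := depth D r) hk
      hanc (odd_dist_of_lt_of_le_egirth hDG hD hke hgirth hxy))
    rw [Set.indicator_of_notMem (mt D.mem_edgeSet.1 hadj)]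
    push_cast at h ⊢
    linarith

theorem mul_card_le_card_blockColoring_ne {r : V} (hk : 0 < k) (hke : Even k)
    (hgirth : (k : ℕ∞) ≤ G.egirth) (hD : IsDFSTree G D r) {x y : V} (hxy : G.Adj x y) :
    (1 / 2 + D.edgeSet.indicator (fun _ => ((k : ℝ) - 1) / (2 * k)) s(x, y)) *
        Fintype.card (Fin k × (Fin (Fintype.card V + k) → Bool)) ≤
      #{ω | blockColoring k (depth D r) ω x ≠ blockColoring k (depth D r) ω y} := by
  obtain ⟨hDG, hDtree, hDFS⟩ := hD
  rcases hDFS x y hxy with hanc | hanc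
  · exact mul_card_le_card_blockColoring_ne_of_ancestor hk hke hgirth hDG hDtree.connected hxy hanc
  · rw [Sym2.eq_swap, filter_congr fun _ _ => ne_comm]
    exact mul_card_le_card_blockColoring_ne_of_ancestor hk hke hgirth hDG hDtree.connected
      hxy.symm hanc

end DFSTree

theorem maxcut_ge_of_girth_even_general {V : Type*} [Fintype V] (k : ℕ) (hk : 0 < k) (hke : Even k)
    (G D : SimpleGraph V) (r : V) (w : Sym2 V → ℝ) (hw : ∀ e, 0 ≤ w e)
    (hgirth : (k : ℕ∞) ≤ G.egirth) (hD : IsDFSTree G D r) :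
    ∃ A : Set V,
      totalWeight G w / 2 + ((k : ℝ) - 1) / (2 * k) * totalWeight D w ≤ cutWeight G w A := by
  have : Nonempty (Fin k) := Fin.pos_iff_nonempty.1 hk
  obtain ⟨ω, hω⟩ := exists_le_cutWeight_of_le_card G w hw (blockColoring k (depth D r))
    (fun e => 1 / 2 + D.edgeSet.indicator (fun _ => ((k : ℝ) - 1) / (2 * k)) e)
    fun _ _ hxy => mul_card_le_card_blockColoring_ne hk hke hgirth hD hxy
  exact ⟨_, (finsum_edgeSet_half_add_indicator_mul hD.1 w _).ge.trans hω⟩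

/-- If `k` is a positive even integer, `G` has girth at least `k` and `D` is a
DFS tree of `G`, then `mac(G) ≥ w(G)/2 + ((k−1)/(2k))·w(D)`. -/
theorem maxcut_ge_of_girth_even {V : Type*} [Fintype V] (k : ℕ) (hk : 0 < k) (hke : Even k)
    (G D : SimpleGraph V) (r : V) (w : Sym2 V → ℝ) (hw : ∀ e, 0 ≤ w e)
    (hG : G.Connected) (hgirth : (k : ℕ∞) ≤ G.egirth) (hD : IsDFSTree G D r) :
    ∃ A : Set V,
      totalWeight G w / 2 + ((k : ℝ) - 1) / (2 * k) * totalWeight D w ≤ cutWeight G w A :=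
  maxcut_ge_of_girth_even_general k hk hke G D r w hw hgirth hD

end MaxCut
end

section
/- Let g be a positive odd integer, let G be a connected weighted graph with nonnegative edge weights whose girth is at least g, and let D be a DFS tree of G. Then mac(G) ≥ w(G)/2 + ((g−2)/(2(g−1)))·w(D). -/
namespace MaxCut

/-!
Take a random cut built from depths in the DFS tree `D`, with `N = g - 1`. Shift all depths by a
uniform `t < N`, cut the depth line into blocks of `N` consecutive levels, colour the levels
alternately inside each block and flip each block by an independent fair sign. Because `D` is a
DFS tree, the ends of every edge differ in depth by exactly their tree distance. A tree edge
therefore joins consecutive levels. It is always cut unless it crosses a block boundary, which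
happens with probability `1/N`, and then it is cut with probability `1/2`. A non-tree edge
closes a cycle with its tree path, so by the girth bound its ends are at least `N` levels apart.
They lie in different blocks, so the edge is cut with probability `1/2`. The expected cut weight
is `w(G)/2 + (N - 1)/(2N) w(D)`, and some cut does at least as well.
-/

open Finset

theorem card_filter_prod_eq_sum {α β : Type*} [Fintype α] [Fintype β] (p : α × β → Prop)
    [DecidablePred p] : #{ω | p ω} = ∑ a, #{b | p (a, b)} := by
  simp only [card_filter, Fintype.sum_prod_type]

theorem two_mul_card_filter_of_involutive {α : Type*} [Fintype α] (p : α → Prop)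
    [DecidablePred p] {f : α → α} (hf : Function.Involutive f) (hp : ∀ x, p (f x) ↔ ¬p x) :
    2 * #{x | p x} = Fintype.card α := by
  have hcard : #{x | p x} = #{x | ¬p x} :=
    card_nbij' f f (fun x hx => by simpa [hp] using hx) (fun x hx => by simpa [hp] using hx)
      (fun x _ => hf x) (fun x _ => hf x)
  rw [two_mul, ← card_univ, ← card_filter_add_card_filter_not (s := univ) p, ← hcard]

theorem card_filter_xor_ne {ι : Type*} [Fintype ι] [DecidableEq ι] {i j : ι} (hij : i ≠ j)
    (a b : Bool) :
    2 * #{ε : ι → Bool | xor a (ε i) ≠ xor b (ε j)} = 2 ^ Fintype.card ι := by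
  rw [two_mul_card_filter_of_involutive _ (f := fun ε => Function.update ε i (!ε i))]
  · simp
  · intro ε; simp
  · intro ε
    simp only [Function.update_self, Function.update_of_ne hij.symm]
    cases a <;> cases b <;> cases ε i <;> cases ε j <;> simp

theorem card_filter_add_mod_eq {N : ℕ} [NeZero N] (n : ℕ) {s : ℕ} (hs : s < N) :
    #{t : Fin N | (n + t) % N = s} = 1 := by
  rw [card_eq_one]
  refine ⟨⟨s, hs⟩ - Fin.ofNat N n, ?_⟩
  ext t
  have : (n + t) % N = (Fin.ofNat N n + t).val := by simp [Fin.val_add]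
  simp only [mem_filter, mem_univ, true_and, mem_singleton, this, eq_sub_iff_add_eq, add_comm t,
    Fin.ext_iff]

-- `Fin.ofNat K` reduces block indices mod `K`; every block used below has index `< K`, so
-- distinct blocks get independent signs.
def blockColor (N : ℕ) {K : ℕ} [NeZero K] (ε : Fin K → Bool) (u : ℕ) : Bool :=
  xor (u % N).bodd (ε (Fin.ofNat K (u / N)))

def layerColor {N K : ℕ} [NeZero K] (ω : Fin N × (Fin K → Bool)) (n : ℕ) : Bool :=
  blockColor N ω.2 (n + ω.1)

section LayerColor

variable {N K : ℕ} [NeZero K]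

theorem two_mul_card_blockColor_ne_of_div_ne {u u' : ℕ} (hu : u / N < K) (hu' : u' / N < K)
    (h : u / N ≠ u' / N) :
    2 * #{ε : Fin K → Bool | blockColor N ε u ≠ blockColor N ε u'} = 2 ^ K := by
  have hij : Fin.ofNat K (u / N) ≠ Fin.ofNat K (u' / N) := by
    simpa [Fin.ext_iff, Nat.mod_eq_of_lt hu, Nat.mod_eq_of_lt hu'] using h
  have := card_filter_xor_ne hij (u % N).bodd (u' % N).bodd
  rw [Fintype.card_fin] at this
  exact this

variable [NeZero N]

theorem two_mul_card_blockColor_ne_succ {u : ℕ} (hu : (u + 1) / N < K) :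
    2 * #{ε : Fin K → Bool | blockColor N ε u ≠ blockColor N ε (u + 1)}
      = if u % N = N - 1 then 2 ^ K else 2 * 2 ^ K := by
  have hN : 0 < N := Nat.pos_of_neZero N
  have hdiv := Nat.div_add_mod u N
  have hmod := Nat.mod_lt u hN
  split_ifs with hlast
  · have hnext : (u + 1) / N = u / N + 1 :=
      ((Nat.div_mod_unique (c := 0) hN).2 ⟨by rw [Nat.mul_succ]; omega, hN⟩).1
    exact two_mul_card_blockColor_ne_of_div_ne (by omega) hu (by omega)
  · have hsame : (u + 1) / N = u / N ∧ (u + 1) % N = u % N + 1 :=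
      (Nat.div_mod_unique hN).2 ⟨by omega, by omega⟩
    rw [filter_true_of_mem, card_univ]
    · simp
    · intro ε _
      simp only [blockColor, hsame, Nat.bodd_succ]
      cases (u % N).bodd <;> simp

theorem two_mul_card_blockColor_ne_of_add_le {u u' : ℕ} (h : u + N ≤ u') (hu' : u' / N < K) :
    2 * #{ε : Fin K → Bool | blockColor N ε u ≠ blockColor N ε u'} = 2 ^ K := by
  have hN : 0 < N := Nat.pos_of_neZero N
  have hlt : u / N < u' / N := by
    have := Nat.div_le_div_right (c := N) h
    rw [Nat.add_div_right u hN] at this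
    omega
  exact two_mul_card_blockColor_ne_of_div_ne (by omega) hu' hlt.ne

theorem two_mul_card_layerColor_ne_succ {n : ℕ} (hn : n + 1 + N ≤ K) :
    2 * #{ω : Fin N × (Fin K → Bool) | layerColor ω n ≠ layerColor ω (n + 1)}
      = (2 * N - 1) * 2 ^ K := by
  have hN : 0 < N := Nat.pos_of_neZero N
  have hlast : N - 1 < N := Nat.sub_lt hN one_pos
  rw [card_filter_prod_eq_sum, mul_sum]
  refine (sum_congr rfl fun t _ => ?_).trans (b := ∑ t : Fin N,
    if (n + t) % N = N - 1 then 2 ^ K else 2 * 2 ^ K) ?_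
  · simp only [layerColor, add_right_comm n 1]
    exact two_mul_card_blockColor_ne_succ ((Nat.div_le_self _ _).trans_lt (by omega))
  have hrest := card_filter_add_card_filter_not (s := (univ : Finset (Fin N)))
    (fun t => (n + t) % N = N - 1)
  rw [card_filter_add_mod_eq n hlast, card_univ, Fintype.card_fin] at hrest
  rw [sum_ite, sum_const, sum_const, card_filter_add_mod_eq n hlast, smul_eq_mul, smul_eq_mul,
    ← Nat.sub_eq_of_eq_add' hrest.symm, show 2 * N - 1 = 1 + (N - 1) * 2 by omega]
  ring

theorem two_mul_card_layerColor_ne_of_add_le {n n' : ℕ} (h : n + N ≤ n') (hn' : n' + N ≤ K) :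
    2 * #{ω : Fin N × (Fin K → Bool) | layerColor ω n ≠ layerColor ω n'} = N * 2 ^ K := by
  rw [card_filter_prod_eq_sum, mul_sum]
  refine (sum_congr rfl fun t _ => ?_).trans (b := ∑ t : Fin N, 2 ^ K) ?_
  · simp only [layerColor]
    exact two_mul_card_blockColor_ne_of_add_le (u := n + t) (u' := n' + t) (by omega)
      ((Nat.div_le_self _ _).trans_lt (by omega))
  · rw [sum_const, card_univ, Fintype.card_fin, smul_eq_mul]
end LayerColor

section Graph

variable {V : Type*} {G D : SimpleGraph V}

theorem exists_mk_eq_and_mem_and_not_mem_iff {c : V → Bool} {x y : V} :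
    (∃ a b, s(x, y) = s(a, b) ∧ a ∈ {v | c v = true} ∧ b ∉ {v | c v = true}) ↔
      c x ≠ c y := by
  constructor
  · rintro ⟨a, b, hab, ha, hb⟩
    rcases Sym2.eq_iff.mp hab with ⟨rfl, rfl⟩ | ⟨rfl, rfl⟩ <;> simp_all
  · intro h
    cases hx : c x
    · exact ⟨y, x, Sym2.eq_swap, by simp_all⟩
    · exact ⟨x, y, rfl, by simp_all⟩

theorem totalWeight_eq_sum [Fintype G.edgeSet] (w : Sym2 V → ℝ) :
    totalWeight G w = ∑ e ∈ G.edgeFinset, w e := by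
  rw [totalWeight, ← SimpleGraph.coe_edgeFinset, finsum_mem_coe_finset]

theorem cutWeight_eq_sum [Fintype G.edgeSet] (w : Sym2 V → ℝ) (A : Set V)
    [DecidablePred fun e => ∃ x y, e = s(x, y) ∧ x ∈ A ∧ y ∉ A] :
    cutWeight G w A =
      ∑ e ∈ G.edgeFinset with ∃ x y, e = s(x, y) ∧ x ∈ A ∧ y ∉ A, w e := by
  rw [cutWeight, ← finsum_mem_coe_finset, coe_filter]
  simp only [SimpleGraph.mem_edgeFinset]

theorem sum_edgeFinset_ite_mul [Fintype G.edgeSet] [Fintype D.edgeSet] [DecidableEq V]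
    (hDG : D ≤ G) (w : Sym2 V → ℝ) (a b : ℝ) :
    ∑ e ∈ G.edgeFinset, (if e ∈ D.edgeFinset then a else b) * w e
      = b * totalWeight G w + (a - b) * totalWeight D w := by
  have hsplit : ∀ e, (if e ∈ D.edgeFinset then a else b) * w e
      = b * w e + if e ∈ D.edgeFinset then (a - b) * w e else 0 := fun e => by
    split_ifs <;> ring
  rw [sum_congr rfl fun e _ => hsplit e, sum_add_distrib, sum_ite_mem,
    inter_eq_right.mpr (SimpleGraph.edgeFinset_mono hDG), ← mul_sum, ← mul_sum,
    totalWeight_eq_sum, totalWeight_eq_sum]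

theorem exists_cutWeight_ge_of_card_ne [Fintype V] [DecidableRel G.Adj] {Ω : Type*}
    [Fintype Ω] [Nonempty Ω] (col : Ω → V → Bool) (w κ : Sym2 V → ℝ)
    (hκ : ∀ x y, G.Adj x y →
      (#{ω | col ω x ≠ col ω y} : ℝ) = κ s(x, y) * Fintype.card Ω) :
    ∃ A : Set V, ∑ e ∈ G.edgeFinset, κ e * w e ≤ cutWeight G w A := by
  classical
  set P : Sym2 V → Ω → Prop := fun e ω =>
    ∃ x y, e = s(x, y) ∧ x ∈ {v | col ω v = true} ∧ y ∉ {v | col ω v = true}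
  have hcount : ∀ e ∈ G.edgeFinset, (#{ω | P e ω} : ℝ) = κ e * Fintype.card Ω := by
    intro e he
    induction e using Sym2.ind with
    | _ x y =>
      simp only [P, exists_mk_eq_and_mem_and_not_mem_iff]
      exact hκ x y (SimpleGraph.mem_edgeFinset.mp he)
  have hsum : ∑ ω, cutWeight G w {v | col ω v = true}
      = ∑ _ω : Ω, ∑ e ∈ G.edgeFinset, κ e * w e := by
    simp only [cutWeight_eq_sum, sum_filter]
    rw [sum_comm, sum_const, card_univ, nsmul_eq_mul, mul_sum]
    refine sum_congr rfl fun e he => ?_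
    rw [← sum_filter, sum_const, nsmul_eq_mul, hcount e he]
    ring
  obtain ⟨ω, -, hω⟩ := exists_le_of_sum_le univ_nonempty hsum.ge
  exact ⟨_, hω⟩

theorem egirth_le_dist_add_one_s7 (hDG : D ≤ G) {x y : V} (hr : D.Reachable x y) (hG : G.Adj x y)
    (hD : ¬D.Adj x y) : G.egirth ≤ D.dist x y + 1 := by
  obtain ⟨p, hp, hlen⟩ := hr.exists_path_of_dist
  have hcycle : (SimpleGraph.Walk.cons hG.symm (p.mapLe hDG)).IsCycle := by
    refine SimpleGraph.Walk.cons_isCycle_iff _ _ |>.mpr ⟨hp.mapLe hDG, fun hmem => hD ?_⟩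
    have hmem' : s(y, x) ∈ p.edges := by simpa using hmem
    exact (p.edges_subset_edgeSet hmem').symm
  simpa [hlen] using SimpleGraph.egirth_le_length hcycle

theorem IsDFSTree.exists_dist_eq_add {r : V} (hD : IsDFSTree G D r) {a b : V} (h : G.Adj a b) :
    ∃ x y, s(a, b) = s(x, y) ∧ D.dist r y = D.dist r x + D.dist x y := by
  rcases hD.2.2 a b h with h | h
  · exact ⟨a, b, rfl, h.symm⟩
  · exact ⟨b, a, Sym2.eq_swap, h.symm⟩


theorem IsDFSTree.card_layerColor_ne {r : V} (hD : IsDFSTree G D r) {N K : ℕ} [NeZero N]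
    [NeZero K] [DecidableRel D.Adj] (hgirth : (N + 1 : ℕ∞) ≤ G.egirth)
    (hK : ∀ v, D.dist r v + N ≤ K) {x y : V}
    (hG : G.Adj x y) (hdist : D.dist r y = D.dist r x + D.dist x y) :
    (#{ω : Fin N × (Fin K → Bool) |
        layerColor ω (D.dist r x) ≠ layerColor ω (D.dist r y)} : ℝ)
      = (if D.Adj x y then (2 * N - 1 : ℝ) / (2 * N) else 1 / 2)
        * Fintype.card (Fin N × (Fin K → Bool)) := by
  have hN : 0 < N := Nat.pos_of_neZero N
  simp only [Fintype.card_prod, Fintype.card_fin, Fintype.card_fun, Fintype.card_bool]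
  push_cast
  split_ifs with hxy
  · rw [SimpleGraph.dist_eq_one_iff_adj.mpr hxy] at hdist
    have hcount := two_mul_card_layerColor_ne_succ (K := K) (n := D.dist r x) (hdist ▸ hK y)
    rw [← hdist] at hcount
    have hcast := congrArg (Nat.cast : ℕ → ℝ) hcount
    push_cast [Nat.cast_sub (by omega : 1 ≤ 2 * N)] at hcast
    field_simp
    linarith
  · have hfar : N + 1 ≤ D.dist x y + 1 := by
      exact_mod_cast hgirth.trans
        (egirth_le_dist_add_one_s7 hD.1 (hD.2.1.connected.preconnected x y) hG hxy)
    have hcount := two_mul_card_layerColor_ne_of_add_le (K := K)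
      (by omega : D.dist r x + N ≤ D.dist r y) (hK y)
    have hcast := congrArg (Nat.cast : ℕ → ℝ) hcount
    push_cast at hcast
    linarith

theorem IsDFSTree.exists_cutWeight_ge [Fintype V] {r : V} (hD : IsDFSTree G D r) {N : ℕ}
    (hN : 0 < N) (hgirth : (N + 1 : ℕ∞) ≤ G.egirth) (w : Sym2 V → ℝ) :
    ∃ A : Set V,
      totalWeight G w / 2 + (N - 1) / (2 * N) * totalWeight D w ≤ cutWeight G w A := by
  classical
  have : NeZero N := ⟨hN.ne'⟩
  set M := univ.sup (D.dist r)
  have : NeZero (M + N) := ⟨by omega⟩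
  have hK : ∀ v, D.dist r v + N ≤ M + N := fun v => by
    have := le_sup (f := D.dist r) (mem_univ v)
    omega
  obtain ⟨A, hA⟩ := exists_cutWeight_ge_of_card_ne (Ω := Fin N × (Fin (M + N) → Bool))
    (fun ω v => layerColor ω (D.dist r v)) w
    (fun e => if e ∈ D.edgeFinset then (2 * N - 1) / (2 * N) else 1 / 2) fun a b hab => by
      simp only [SimpleGraph.mem_edgeFinset, SimpleGraph.mem_edgeSet]
      obtain ⟨x, y, hxy, hdist⟩ := hD.exists_dist_eq_add hab
      rcases Sym2.eq_iff.mp hxy with ⟨rfl, rfl⟩ | ⟨rfl, rfl⟩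
      · exact hD.card_layerColor_ne hgirth hK hab hdist
      · simpa only [ne_comm, D.adj_comm] using hD.card_layerColor_ne hgirth hK hab.symm hdist
  refine ⟨A, le_of_eq_of_le ?_ hA⟩
  rw [sum_edgeFinset_ite_mul hD.1]
  field_simp
  ring

end Graph

theorem maxcut_ge_of_girth_odd_general {V : Type*} [Fintype V] (g : ℕ) (hg : 0 < g)
    (G D : SimpleGraph V) (r : V) (w : Sym2 V → ℝ)
    (hgirth : (g : ℕ∞) ≤ G.egirth) (hD : IsDFSTree G D r) :
    ∃ A : Set V,
      totalWeight G w / 2 + ((g : ℝ) - 2) / (2 * ((g : ℝ) - 1)) * totalWeight D w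
        ≤ cutWeight G w A := by
  obtain ⟨N, hN, hNgirth, hcoef⟩ : ∃ N : ℕ, 0 < N ∧ (N + 1 : ℕ∞) ≤ G.egirth ∧
      ((N : ℝ) - 1) / (2 * N) = ((g : ℝ) - 2) / (2 * ((g : ℝ) - 1)) := by
    rcases (show g = 1 ∨ 2 ≤ g by omega) with rfl | hg2
    -- For `g = 1` the target coefficient is `(1 - 2) / 0 = 0`, as is the one for `N = 1`.
    · exact ⟨1, one_pos, le_trans (by norm_num) G.three_le_egirth, by norm_num⟩
    · refine ⟨g - 1, by omega, ?_, ?_⟩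
      · rwa [← ENat.natCast_one, ← ENat.natCast_add, Nat.sub_add_cancel (by omega)]
      · rw [Nat.cast_sub (by omega)]
        ring_nf
  rw [← hcoef]
  exact hD.exists_cutWeight_ge hN hNgirth w

/-- If `g` is a positive odd integer, `G` has girth at least `g` and `D` is a
DFS tree of `G`, then `mac(G) ≥ w(G)/2 + ((g−2)/(2(g−1)))·w(D)`. -/
theorem maxcut_ge_of_girth_odd {V : Type*} [Fintype V] (g : ℕ) (hg : 0 < g) (hgo : Odd g)
    (G D : SimpleGraph V) (r : V) (w : Sym2 V → ℝ) (hw : ∀ e, 0 ≤ w e)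
    (hG : G.Connected) (hgirth : (g : ℕ∞) ≤ G.egirth) (hD : IsDFSTree G D r) :
    ∃ A : Set V,
      totalWeight G w / 2 + ((g : ℝ) - 2) / (2 * ((g : ℝ) - 1)) * totalWeight D w
        ≤ cutWeight G w A :=
  maxcut_ge_of_girth_odd_general g hg G D r w hgirth hD

end MaxCut
end

section
/- For the 5-cycle C₅ with all edge weights equal to 1: mac(C₅) = 4, w(C₅) = 5, and every spanning tree T of C₅ satisfies w(T) = 4; consequently mac(C₅) = w(C₅)/2 + (3/8)·w(T), so the constant 3/8 cannot be improved in bounds of the form mac(G) ≥ w(G)/2 + θ·w(T) for triangle-free graphs. -/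
namespace MaxCut

/-- The 5-cycle on `ZMod 5`. -/
def C5 : SimpleGraph (ZMod 5) := SimpleGraph.fromRel (fun x y => x - y = 1)


lemma sum_ones (S : Set (Sym2 (ZMod 5))) : ∑ᶠ e ∈ S, (1:ℝ) = S.ncard := by
  have h : S.Finite := Set.toFinite S
  rw [← h.coe_toFinset, finsum_mem_coe_finset, Finset.sum_const, nsmul_eq_mul, mul_one,
    Set.ncard_coe_finset]

def EF : Finset (Sym2 (ZMod 5)) := {s(0,1), s(1,2), s(2,3), s(3,4), s(4,0)}

lemma edgeC5 : C5.edgeSet = ↑EF := by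
  ext e
  refine Sym2.ind (fun x y => ?_) e
  simp only [SimpleGraph.mem_edgeSet, C5, SimpleGraph.fromRel_adj, EF, Finset.coe_insert,
    Set.mem_insert_iff, Finset.coe_singleton, Set.mem_singleton_iff, Sym2.eq, Sym2.rel_iff',
    Prod.mk.injEq, Prod.swap_prod_mk]
  revert x y; decide

lemma cross_iff {A : Set (ZMod 5)} {a b : ZMod 5}
    (h : ∃ x y, s(a,b) = s(x,y) ∧ x ∈ A ∧ y ∉ A) : (a ∈ A ↔ b ∉ A) := by
  obtain ⟨x, y, he, hx, hy⟩ := h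
  rw [Sym2.eq, Sym2.rel_iff', Prod.mk.injEq, Prod.swap_prod_mk, Prod.mk.injEq] at he
  rcases he with ⟨rfl, rfl⟩ | ⟨rfl, rfl⟩ <;> tauto

lemma cut_ne (A : Set (ZMod 5)) :
    {e ∈ C5.edgeSet | ∃ x y, e = s(x, y) ∧ x ∈ A ∧ y ∉ A} ≠ C5.edgeSet := by
  intro h
  have mem : ∀ e ∈ EF, ∃ x y, e = s(x,y) ∧ x ∈ A ∧ y ∉ A := by
    intro e he
    have : e ∈ C5.edgeSet := by rw [edgeC5]; exact_mod_cast he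
    rw [← h] at this
    exact this.2
  have h1 := cross_iff (mem s(0,1) (by decide))
  have h2 := cross_iff (mem s(1,2) (by decide))
  have h3 := cross_iff (mem s(2,3) (by decide))
  have h4 := cross_iff (mem s(3,4) (by decide))
  have h5 := cross_iff (mem s(4,0) (by decide))
  tauto

lemma cut_example :
    {e ∈ C5.edgeSet | ∃ x y, e = s(x, y) ∧ x ∈ {z : ZMod 5 | z = 0 ∨ z = 2} ∧
      y ∉ {z : ZMod 5 | z = 0 ∨ z = 2}}
      = ↑({s(0,1), s(1,2), s(2,3), s(4,0)} : Finset (Sym2 (ZMod 5))) := by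
  ext e
  refine Sym2.ind (fun x y => ?_) e
  simp only [Set.mem_setOf_eq, SimpleGraph.mem_edgeSet, C5, SimpleGraph.fromRel_adj,
    Finset.coe_insert, Set.mem_insert_iff, Finset.coe_singleton, Set.mem_singleton_iff,
    Sym2.eq, Sym2.rel_iff', Prod.mk.injEq, Prod.swap_prod_mk]
  revert x y; decide

/-- For the unweighted 5-cycle, `mac(C₅) = 4`, `w(C₅) = 5`, every spanning tree
has weight `4`, and `4 = 5/2 + (3/8)·4`; so the constant `3/8` is optimal. -/

theorem maxcut_C5 :
    (∃ A : Set (ZMod 5), cutWeight C5 (fun _ => 1) A = 4) ∧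
    (∀ A : Set (ZMod 5), cutWeight C5 (fun _ => 1) A ≤ 4) ∧
    totalWeight C5 (fun _ => 1) = 5 ∧
    (∀ T : SimpleGraph (ZMod 5), IsSpanningTree C5 T →
      totalWeight T (fun _ => 1) = 4 ∧
      (4 : ℝ) = totalWeight C5 (fun _ => 1) / 2 + 3 / 8 * totalWeight T (fun _ => 1)) := by
  have hE : C5.edgeSet.ncard = 5 := by rw [edgeC5, Set.ncard_coe_finset]; decide
  have htot : totalWeight C5 (fun _ => 1) = 5 := by
    rw [totalWeight, sum_ones, hE]; norm_num
  refine ⟨?_, ?_, htot, ?_⟩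
  · refine ⟨{z : ZMod 5 | z = 0 ∨ z = 2}, ?_⟩
    rw [cutWeight, sum_ones, cut_example, Set.ncard_coe_finset]
    have h4 : ({s(0,1), s(1,2), s(2,3), s(4,0)} : Finset (Sym2 (ZMod 5))).card = 4 := by decide
    rw [h4]; norm_num
  · intro A
    rw [cutWeight, sum_ones]
    have hsub : {e ∈ C5.edgeSet | ∃ x y, e = s(x, y) ∧ x ∈ A ∧ y ∉ A} ⊆ C5.edgeSet :=
      Set.sep_subset _ _
    have hlt : {e ∈ C5.edgeSet | ∃ x y, e = s(x, y) ∧ x ∈ A ∧ y ∉ A}.ncard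
        < C5.edgeSet.ncard :=
      Set.ncard_lt_ncard (ssubset_of_subset_of_ne hsub (cut_ne A)) (Set.toFinite _)
    rw [hE] at hlt
    have : {e ∈ C5.edgeSet | ∃ x y, e = s(x, y) ∧ x ∈ A ∧ y ∉ A}.ncard ≤ 4 := by omega
    exact_mod_cast this
  · intro T ⟨hle, hT⟩
    classical
    haveI : Fintype T.edgeSet := Fintype.ofFinite _
    have hcard := hT.card_edgeFinset
    have h5 : Fintype.card (ZMod 5) = 5 := by decide
    rw [h5] at hcard
    have hnc : T.edgeSet.ncard = 4 := by
      rw [Set.ncard_eq_toFinset_card' T.edgeSet]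
      have : T.edgeFinset.card = 4 := by omega
      simpa [SimpleGraph.edgeFinset] using this
    have hw : totalWeight T (fun _ => 1) = 4 := by
      rw [totalWeight, sum_ones, hnc]; norm_num
    refine ⟨hw, ?_⟩
    rw [hw, htot]; norm_num

end MaxCut
end

section
/- If every weighted triangle-free graph with maximum degree at most 3 satisfies mac(G) ≥ (4/5)·w(G), then every (unweighted) triangle-free graph G with maximum degree at most 3 contains a set E' of edges such that every 5-cycle of G contains exactly one edge from E'. -/
namespace MaxCut

open Finset

/-- crossing predicate -/
def crossE {V : Type*} (A : Set V) (e : Sym2 V) : Prop :=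
  ∃ x y, e = s(x, y) ∧ x ∈ A ∧ y ∉ A

lemma crossE_mk {V : Type*} (A : Set V) (a b : V) :
    crossE A s(a, b) ↔ ((a ∈ A ∧ b ∉ A) ∨ (b ∈ A ∧ a ∉ A)) := by
  constructor
  · rintro ⟨x, y, hxy, hx, hy⟩
    rw [Sym2.eq_iff] at hxy
    rcases hxy with ⟨rfl, rfl⟩ | ⟨rfl, rfl⟩
    · exact Or.inl ⟨hx, hy⟩
    · exact Or.inr ⟨hx, hy⟩
  · rintro (⟨ha, hb⟩ | ⟨hb, ha⟩)
    · exact ⟨a, b, rfl, ha, hb⟩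
    · exact ⟨b, a, Sym2.eq_swap, hb, ha⟩

lemma alt {V : Type*} {G : SimpleGraph V} (A : Set V) {u v : V} (p : G.Walk u v)
    (h : ∀ e ∈ p.edges, crossE A e) : ((u ∈ A ↔ v ∈ A) ↔ Even p.length) := by
  induction p with
  | nil => simp
  | cons ha q ih =>
    rename_i a b c
    have h1 := (crossE_mk A a b).mp (h s(a, b) (by simp))
    have h2 := ih (fun e he => h e (by simp [he]))
    simp only [SimpleGraph.Walk.length_cons, Nat.even_add_one]
    by_cases hb : b ∈ A <;> by_cases hc : c ∈ A <;> by_cases haa : a ∈ A <;> simp_all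

/-- If every weighted triangle-free graph with maximum degree at most 3
satisfies `mac(G) ≥ (4/5)·w(G)`, then every (unweighted) triangle-free graph `G` with maximum
degree at most 3 contains an edge set `E'` such that every 5-cycle of `G` contains exactly
one edge from `E'`. -/
theorem conj_four_fifths_implies_five_cycle_cover
    (H : ∀ (n : ℕ) (G : SimpleGraph (Fin n)) (w : Sym2 (Fin n) → ℝ),
      (∀ e, 0 ≤ w e) → G.CliqueFree 3 → MaxDegreeLE G 3 →
      ∃ A : Set (Fin n), 4 / 5 * totalWeight G w ≤ cutWeight G w A) :
    ∀ (n : ℕ) (G : SimpleGraph (Fin n)),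
      G.CliqueFree 3 → MaxDegreeLE G 3 →
      ∃ E' ⊆ G.edgeSet, ∀ (v : Fin n) (p : G.Walk v v),
        p.IsCycle → p.length = 5 → ∃! e : Sym2 (Fin n), e ∈ p.edges ∧ e ∈ E' := by
  intro n G hcf hdeg
  classical
  -- the finset of rooted directed 5-cycles
  set C : Finset (Σ v : Fin n, G.Walk v v) :=
    Finset.univ.sigma (fun v => (G.finsetWalkLength 5 v v).filter (fun p => p.IsCycle)) with hC
  have memC : ∀ (v : Fin n) (p : G.Walk v v), (⟨v, p⟩ : Σ v : Fin n, G.Walk v v) ∈ C ↔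
      (p.length = 5 ∧ p.IsCycle) := by
    intro v p
    simp [hC, SimpleGraph.mem_finsetWalkLength_iff, and_comm]
  -- the weight: number of 5-cycles through e
  set w : Sym2 (Fin n) → ℝ := fun e => ((C.filter (fun c => e ∈ c.2.edges)).card : ℝ) with hw
  have hw0 : ∀ e, 0 ≤ w e := fun e => Nat.cast_nonneg _
  set E : Finset (Sym2 (Fin n)) := G.edgeFinset with hE
  -- for each cycle c, its edge finset has card 5 and sits in E
  have hT : ∀ c ∈ C, (E.filter (fun e => e ∈ c.2.edges)) = c.2.edges.toFinset := by
    rintro ⟨v, p⟩ hc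
    ext e
    simp only [mem_filter, List.mem_toFinset, hE, SimpleGraph.mem_edgeFinset]
    exact ⟨fun h => h.2, fun h => ⟨p.edges_subset_edgeSet h, h⟩⟩
  have hT5 : ∀ c ∈ C, (E.filter (fun e => e ∈ c.2.edges)).card = 5 := by
    rintro ⟨v, p⟩ hc
    rw [hT _ hc]
    have h5 := (memC v p).mp hc
    rw [List.toFinset_card_of_nodup h5.2.edges_nodup, SimpleGraph.Walk.length_edges, h5.1]
  -- double counting over any subfinset S of edges
  have dc : ∀ S : Finset (Sym2 (Fin n)),
      ∑ e ∈ S, ((C.filter (fun c => e ∈ c.2.edges)).card : ℝ)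
        = ∑ c ∈ C, ((S.filter (fun e => e ∈ c.2.edges)).card : ℝ) := by
    intro S
    simp only [Finset.card_filter]
    push_cast
    rw [Finset.sum_comm]
  -- totalWeight
  have htot : totalWeight G w = 5 * C.card := by
    rw [totalWeight, ← SimpleGraph.coe_edgeFinset, finsum_mem_coe_finset, hw]
    rw [dc E]
    rw [Finset.sum_congr rfl (fun c hc => by rw [hT5 c hc])]
    simp [mul_comm]
  obtain ⟨A, hA⟩ := H n G w hw0 hcf hdeg
  -- cut finset
  set cutF : Finset (Sym2 (Fin n)) := E.filter (crossE A) with hcutF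
  have hcutW : cutWeight G w A = ∑ c ∈ C, ((cutF.filter (fun e => e ∈ c.2.edges)).card : ℝ) := by
    have hset : {e ∈ G.edgeSet | ∃ x y, e = s(x, y) ∧ x ∈ A ∧ y ∉ A} = (cutF : Set (Sym2 (Fin n))) := by
      ext e
      simp [hcutF, crossE, hE, Set.mem_setOf_eq]
    rw [cutWeight, hset, finsum_mem_coe_finset, hw, dc cutF]
  -- each cycle has at most 4 crossing edges
  have hk4 : ∀ c ∈ C, (cutF.filter (fun e => e ∈ c.2.edges)).card ≤ 4 := by
    rintro ⟨v, p⟩ hc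
    by_contra hgt
    push_neg at hgt
    have hgt' : 4 < (cutF.filter (fun e => e ∈ p.edges)).card := hgt
    have hsub : cutF.filter (fun e => e ∈ p.edges) ⊆ E.filter (fun e => e ∈ p.edges) := by
      apply Finset.filter_subset_filter
      exact Finset.filter_subset _ _
    have hle : (cutF.filter (fun e => e ∈ p.edges)).card ≤ 5 := by
      rw [← hT5 _ hc]; exact Finset.card_le_card hsub
    have heq : cutF.filter (fun e => e ∈ p.edges) = E.filter (fun e => e ∈ p.edges) :=
      Finset.eq_of_subset_of_card_le hsub (by rw [hT5 _ hc]; omega)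
    -- so every edge of p crosses
    have hall : ∀ e ∈ p.edges, crossE A e := by
      intro e he
      have heE : e ∈ E.filter (fun e => e ∈ p.edges) := by
        rw [hT _ hc]; simpa using he
      rw [← heq, hcutF, Finset.filter_filter] at heE
      exact (Finset.mem_filter.mp heE).2.1
    have h5 := (memC v p).mp hc
    have hev := (alt A p hall).mp Iff.rfl
    rw [h5.1] at hev
    exact absurd hev (by decide)
  -- combine: each cycle has exactly 4 crossing edges
  have hsum_le : ∑ c ∈ C, ((cutF.filter (fun e => e ∈ c.2.edges)).card : ℝ) ≤ ∑ c ∈ C, (4 : ℝ) :=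
    Finset.sum_le_sum (fun c hc => by exact_mod_cast hk4 c hc)
  have hge : ∑ c ∈ C, (4 : ℝ) ≤ ∑ c ∈ C, ((cutF.filter (fun e => e ∈ c.2.edges)).card : ℝ) := by
    rw [← hcutW, Finset.sum_const, nsmul_eq_mul]
    calc (C.card : ℝ) * (4:ℝ) = 4 / 5 * (5 * C.card) := by ring
      _ = 4 / 5 * totalWeight G w := by rw [htot]
      _ ≤ cutWeight G w A := hA
  have heq4 : ∀ c ∈ C, ((cutF.filter (fun e => e ∈ c.2.edges)).card : ℝ) = 4 := by
    have := (Finset.sum_eq_sum_iff_of_le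
      (fun c hc => by exact_mod_cast hk4 c hc : ∀ c ∈ C,
        ((cutF.filter (fun e => e ∈ c.2.edges)).card : ℝ) ≤ 4)).mp
      (le_antisymm hsum_le hge)
    exact this
  -- define E'
  refine ⟨{e | e ∈ G.edgeSet ∧ ¬ crossE A e}, fun e he => he.1, ?_⟩
  intro v p hcyc hlen
  have hc : (⟨v, p⟩ : Σ v : Fin n, G.Walk v v) ∈ C := (memC v p).mpr ⟨hlen, hcyc⟩
  have h4 : (cutF.filter (fun e => e ∈ p.edges)).card = 4 := by
    exact_mod_cast heq4 _ hc
  have hsplit : ((E.filter (fun e => e ∈ p.edges)).filter (crossE A)).card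
      + ((E.filter (fun e => e ∈ p.edges)).filter (fun e => ¬ crossE A e)).card = 5 := by
    rw [Finset.card_filter_add_card_filter_not, hT5 _ hc]
  have hcomm : (E.filter (fun e => e ∈ p.edges)).filter (crossE A)
      = cutF.filter (fun e => e ∈ p.edges) := by
    rw [hcutF, Finset.filter_filter, Finset.filter_filter]
    exact Finset.filter_congr (fun e _ => and_comm)
  rw [hcomm, h4] at hsplit
  have h1 : ((E.filter (fun e => e ∈ p.edges)).filter (fun e => ¬ crossE A e)).card = 1 := by omega
  obtain ⟨a, ha⟩ := Finset.card_eq_one.mp h1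
  have hamem : a ∈ (E.filter (fun e => e ∈ p.edges)).filter (fun e => ¬ crossE A e) := by
    rw [ha]; exact Finset.mem_singleton_self a
  simp only [Finset.mem_filter, hE, SimpleGraph.mem_edgeFinset] at hamem
  refine ⟨a, ⟨hamem.1.2, hamem.1.1, hamem.2⟩, ?_⟩
  rintro e ⟨hep, heE, hecross⟩
  have : e ∈ (E.filter (fun e => e ∈ p.edges)).filter (fun e => ¬ crossE A e) := by
    simp only [Finset.mem_filter, hE, SimpleGraph.mem_edgeFinset]
    exact ⟨⟨heE, hep⟩, hecross⟩
  rw [ha, Finset.mem_singleton] at this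
  exact this


end MaxCut
end
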